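/- arXiv:2003.00267 — 4 statements merged into one kernel-verified Lean document; each statement's English description precedes it below -/
import Mathlib

section
/- Let τ be a permutation of size k ≥ 1. For every n ≥ 1, the number of bounded affine permutations of size n that avoid τ satisfies |S̃//_n(τ)| ≤ 3^n · |S_n(τ)|. Consequently, lim sup_{n→∞} |S̃//_n(τ)|^{1/n} ≤ 3 · lim sup_{n→∞} |S_n(τ)|^{1/n}. -/
/-- `σ : ℤ → ℤ` is an affine permutation of size `n` (values indexed 1,…,n). -/
def IsAffinePerm (n : ℕ) (σ : ℤ → ℤ) : Prop :=
  Function.Bijective σ ∧ (∀ i : ℤ, σ (i + n) = σ i + n) ∧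
    (∑ i ∈ Finset.Icc (1 : ℤ) (n : ℤ), σ i) = ∑ i ∈ Finset.Icc (1 : ℤ) (n : ℤ), i

/-- Bounded affine permutation of size `n`. -/
def IsBoundedAffinePerm (n : ℕ) (σ : ℤ → ℤ) : Prop :=
  IsAffinePerm n σ ∧ ∀ i : ℤ, |σ i - i| < (n : ℤ)

/-- Ordinary pattern containment. -/
def PermContains {n k : ℕ} (π : Equiv.Perm (Fin n)) (τ : Equiv.Perm (Fin k)) : Prop :=
  ∃ f : Fin k → Fin n, StrictMono f ∧ ∀ s t : Fin k, τ s < τ t ↔ π (f s) < π (f t)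

/-- A function `σ : ℤ → ℤ` contains the ordinary pattern `τ`. -/
def AffContains {k : ℕ} (σ : ℤ → ℤ) (τ : Equiv.Perm (Fin k)) : Prop :=
  ∃ f : Fin k → ℤ, StrictMono f ∧ ∀ s t : Fin k, τ s < τ t ↔ σ (f s) < σ (f t)

/-- The shift `Σ^r σ`. -/
def shiftPerm (r : ℤ) (σ : ℤ → ℤ) : ℤ → ℤ := fun i => σ (i - r) + r

/-- The infinite sum `⊕π : ℤ → ℤ` of a permutation `π` of size `n ≥ 1`,
with the convention that `π` acts (1-indexed) on `{1,…,n}`. -/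
def infiniteSum {n : ℕ} (hn : 0 < n) (π : Equiv.Perm (Fin n)) : ℤ → ℤ := fun i =>
  ((π ⟨((i - 1) % (n : ℤ)).toNat, by
      have h0 : (0 : ℤ) < (n : ℤ) := by exact_mod_cast hn
      have h1 : 0 ≤ (i - 1) % (n : ℤ) := Int.emod_nonneg _ h0.ne'
      have h2 : (i - 1) % (n : ℤ) < (n : ℤ) := Int.emod_lt_of_pos _ h0
      omega⟩ : Fin n).val : ℤ) + 1 + (n : ℤ) * ((i - 1) / (n : ℤ))

/-- `aff(C)`: all shifts of infinite sums of members of `C`. -/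
def AffOfClass (C : (n : ℕ) → Set (Equiv.Perm (Fin n))) : Set (ℤ → ℤ) :=
  {σ | ∃ (m : ℕ) (hm : 0 < m) (π : Equiv.Perm (Fin m)) (r : ℤ),
      π ∈ C m ∧ σ = shiftPerm r (infiniteSum hm π)}

/-- The direct sum `σ ⊕ ρ` of two permutations. -/
def permDirectSum {a b : ℕ} (σ : Equiv.Perm (Fin a)) (ρ : Equiv.Perm (Fin b)) :
    Equiv.Perm (Fin (a + b)) :=
  finSumFinEquiv.symm.trans ((Equiv.sumCongr σ ρ).trans finSumFinEquiv)

/-- A permutation is sum-indecomposable if it is not a sum of two permutations of nonzero size. -/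
def IsSumIndecomposable {n : ℕ} (π : Equiv.Perm (Fin n)) : Prop :=
  ¬ ∃ (a b : ℕ) (_ : 0 < a) (_ : 0 < b) (h : a + b = n)
      (σ : Equiv.Perm (Fin a)) (ρ : Equiv.Perm (Fin b)),
      π = (finCongr h).permCongr (permDirectSum σ ρ)

/-- `π` maps the first `d` positions onto the first `d` values. -/
def IsPrefixInvariant {n : ℕ} (π : Equiv.Perm (Fin n)) (d : ℕ) : Prop :=
  ∀ i : Fin n, ((π i : ℕ) < d ↔ (i : ℕ) < d)

/-- `a(π)`: the size of the first sum-indecomposable block of `π`. -/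
noncomputable def firstBlockSize {n : ℕ} (π : Equiv.Perm (Fin n)) : ℕ :=
  sInf {d : ℕ | 1 ≤ d ∧ d ≤ n ∧ IsPrefixInvariant π d}

/-- `χ(π)`: the number of sum-indecomposable blocks of `π`. -/
noncomputable def numBlocks {n : ℕ} (π : Equiv.Perm (Fin n)) : ℕ :=
  Set.ncard {d : ℕ | 1 ≤ d ∧ d ≤ n ∧ IsPrefixInvariant π d}

/-- `C` is a permutation class: it is closed under pattern containment. -/
def IsPermClass (C : (n : ℕ) → Set (Equiv.Perm (Fin n))) : Prop :=
  ∀ (n k : ℕ) (π : Equiv.Perm (Fin n)) (τ : Equiv.Perm (Fin k)),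
    π ∈ C n → PermContains π τ → τ ∈ C k

/-- `C` is sum closed. -/
def IsSumClosed (C : (n : ℕ) → Set (Equiv.Perm (Fin n))) : Prop :=
  ∀ (a b : ℕ) (σ : Equiv.Perm (Fin a)) (ρ : Equiv.Perm (Fin b)),
    σ ∈ C a → ρ ∈ C b → permDirectSum σ ρ ∈ C (a + b)

/-- The infinite increasing oscillation `𝒪`. -/
def oscillO : ℤ → ℤ := fun i => if Odd i then i + 2 else i - 2

/-- An affine permutation is decomposable if it is a shift of an infinite sum. -/
def IsDecomposableAffine (ω : ℤ → ℤ) : Prop :=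
  ∃ (r : ℤ) (m : ℕ) (hm : 0 < m) (π : Equiv.Perm (Fin m)),
    ω = shiftPerm r (infiniteSum hm π)

/-- Containment of one `ℤ → ℤ` permutation in another. -/
def ContainsAffine (ω ω' : ℤ → ℤ) : Prop :=
  ∃ φ φ' : ℤ → ℤ, StrictMono φ ∧ StrictMono φ' ∧ ∀ i : ℤ, ω (φ i) = φ' (ω' i)

/-- The inversion graph of a function `ℤ → ℤ`. -/
def invGraph (ω : ℤ → ℤ) : SimpleGraph ℤ where
  Adj i j := (i < j ∧ ω j < ω i) ∨ (j < i ∧ ω i < ω j)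
  symm := ⟨fun _ _ h => Or.symm h⟩
  loopless := ⟨by rintro i (⟨h, -⟩ | ⟨h, -⟩) <;> exact lt_irrefl i h⟩

/-- Number of excedances of a permutation (1-indexed: positions `i` with `π(i) > i`). -/
def excCount {n : ℕ} (π : Equiv.Perm (Fin n)) : ℕ :=
  (Finset.univ.filter fun i => i < π i).card

/-- Number of fixed points of a permutation. -/
def numFixedPoints {n : ℕ} (π : Equiv.Perm (Fin n)) : ℕ :=
  (Finset.univ.filter fun i => π i = i).card

/-- Eulerian number `a(n,k)`: permutations of size `n` with `k` excedances. -/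
noncomputable def eulerianA (n k : ℕ) : ℕ := Nat.card {π : Equiv.Perm (Fin n) // excCount π = k}

/-- Derangement Eulerian number `d(n,k)`. -/
noncomputable def derangD (n k : ℕ) : ℕ :=
  Nat.card {π : Equiv.Perm (Fin n) // (∀ i, π i ≠ i) ∧ excCount π = k}


/-!
A bounded affine permutation is determined by its window `σ 1, …, σ n`, and the window is
determined by its set of values together with its order pattern. The pattern is a permutation of
size `n` that avoids `τ` whenever `σ` does. The values meet every residue class mod `n` exactly
once and lie in `(-n, 2n]`, so the value set is fixed by choosing one of three blocks for each
residue: at most `3 ^ n` choices.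

For the growth rates the right-hand limsup has to be finite, which is the Stanley–Wilf
conjecture. It follows from the Marcus–Tardos theorem (an `m × m` 0-1 matrix avoiding a fixed
permutation matrix has `O(m)` ones) by Klazar's argument: contracting `2 × 2` blocks shows that the
number of avoiding `2m × 2m` matrices is at most `16 ^ O(m)` times the number of avoiding
`m × m` matrices.
-/

open Finset

namespace ZeroOneMatrix

/-- A finite `s ⊆ ℕ × ℕ` stands for the 0-1 matrix with ones at `s`; it contains `P` when some
`k × k` submatrix has a one wherever the permutation matrix of `P` has one. -/
def Contains {k : ℕ} (s : Finset (ℕ × ℕ)) (P : Equiv.Perm (Fin k)) : Prop :=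
  ∃ r c : Fin k → ℕ, StrictMono r ∧ StrictMono c ∧ ∀ i, (r i, c (P i)) ∈ s

def blockIndex (q : ℕ) (p : ℕ × ℕ) : ℕ × ℕ := (p.1 / q, p.2 / q)

def contract (q : ℕ) (s : Finset (ℕ × ℕ)) : Finset (ℕ × ℕ) := s.image (blockIndex q)

def block (q : ℕ) (s : Finset (ℕ × ℕ)) (B : ℕ × ℕ) : Finset (ℕ × ℕ) :=
  {p ∈ s | blockIndex q p = B}

def blockRows (q : ℕ) (s : Finset (ℕ × ℕ)) (B : ℕ × ℕ) : Finset ℕ := (block q s B).image Prod.fst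

def blockCols (q : ℕ) (s : Finset (ℕ × ℕ)) (B : ℕ × ℕ) : Finset ℕ := (block q s B).image Prod.snd

def transpose (s : Finset (ℕ × ℕ)) : Finset (ℕ × ℕ) := s.image Prod.swap

variable {k q : ℕ} {P : Equiv.Perm (Fin k)} {s : Finset (ℕ × ℕ)}

theorem mem_Ico_iff_div_eq (hq : 0 < q) {a I : ℕ} : a ∈ Ico (I * q) (I * q + q) ↔ a / q = I := by
  rw [mem_Ico, Nat.div_eq_iff hq]
  omega

theorem div_eq_of_mem_block {B p : ℕ × ℕ} (hp : p ∈ block q s B) :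
    p.1 / q = B.1 ∧ p.2 / q = B.2 := by
  obtain ⟨-, rfl⟩ := mem_filter.1 hp
  exact ⟨rfl, rfl⟩

theorem mem_transpose {p : ℕ × ℕ} : p ∈ transpose s ↔ p.swap ∈ s := by
  simp [transpose, Prod.swap_eq_iff_eq_swap]

theorem blockCols_eq_blockRows_transpose (I J : ℕ) :
    blockCols q s (I, J) = blockRows q (transpose s) (J, I) := by
  ext x
  simp [blockCols, blockRows, block, blockIndex, mem_transpose, and_comm]

theorem Contains.of_contract (h : Contains (contract q s) P) : Contains s P := by
  obtain ⟨R, C, hR, hC, hRC⟩ := h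
  choose p hps hp using fun i => mem_image.1 (hRC i)
  have hp1 : ∀ i, (p i).1 / q = R i := fun i => congrArg Prod.fst (hp i)
  have hp2 : ∀ i, (p i).2 / q = C (P i) := fun i => congrArg Prod.snd (hp i)
  refine ⟨fun i => (p i).1, fun j => (p (P.symm j)).2, fun i i' h => ?_, fun j j' h => ?_,
    fun i => by simpa using hps i⟩
  · exact Nat.lt_of_div_lt_div (c := q) (by rw [hp1, hp1]; exact hR h)
  · exact Nat.lt_of_div_lt_div (c := q) (by rw [hp2, hp2]; simpa using hC h)

theorem Contains.of_transpose (h : Contains (transpose s) P.symm) : Contains s P := by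
  obtain ⟨r, c, hr, hc, hrc⟩ := h
  exact ⟨c, r, hc, hr, fun j => by simpa [mem_transpose] using hrc (P j)⟩

theorem blockRows_subset (hq : 0 < q) (B : ℕ × ℕ) :
    blockRows q s B ⊆ Ico (B.1 * q) (B.1 * q + q) := by
  intro a ha
  obtain ⟨p, hp, rfl⟩ := mem_image.1 ha
  exact (mem_Ico_iff_div_eq hq).2 (div_eq_of_mem_block hp).1

theorem card_blockRows_le (hq : 0 < q) (B : ℕ × ℕ) : #(blockRows q s B) ≤ q :=
  (card_le_card (blockRows_subset hq B)).trans (by simp)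

theorem card_blockCols_le (hq : 0 < q) (B : ℕ × ℕ) : #(blockCols q s B) ≤ q := by
  rw [blockCols_eq_blockRows_transpose]
  exact card_blockRows_le hq _

theorem card_block_le (B : ℕ × ℕ) : #(block q s B) ≤ #(blockRows q s B) * #(blockCols q s B) := by
  rw [← card_product]
  exact card_le_card fun p hp => mem_product.2 ⟨mem_image_of_mem _ hp, mem_image_of_mem _ hp⟩

/-- Marcus–Tardos: a block is *tall* if its ones occupy at least `k` rows. If one block row had
more than `(k - 1) * q.choose k` tall blocks, `k` of them would share `k` occupied rows, and these
rows together with one suitable column in each of those `k` blocks would contain `P`. -/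
theorem card_tall_le (hq : 0 < q) (hs : ¬ Contains s P) (I : ℕ) (Js : Finset ℕ) :
    #{J ∈ Js | k ≤ #(blockRows q s (I, J))} ≤ (k - 1) * q.choose k := by
  by_contra! hlt
  set tall := {J ∈ Js | k ≤ #(blockRows q s (I, J))}
  choose! F hFsub hFcard using fun J (hJ : J ∈ tall) => exists_subset_card_eq (mem_filter.1 hJ).2
  have hmaps : ∀ J ∈ tall, F J ∈ powersetCard k (Ico (I * q) (I * q + q)) := fun J hJ =>
    mem_powersetCard.2 ⟨(hFsub J hJ).trans (blockRows_subset hq _), hFcard J hJ⟩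
  obtain ⟨S, hS, hfib⟩ := exists_lt_card_fiber_of_mul_lt_card_of_maps_to hmaps
    (by rwa [card_powersetCard, Nat.card_Ico, Nat.add_sub_cancel_left, mul_comm])
  obtain ⟨T, hT, hTcard⟩ := exists_subset_card_eq (show k ≤ #{J ∈ tall | F J = S} by omega)
  have hScard : #S = k := (mem_powersetCard.1 hS).2
  set ρ := S.orderEmbOfFin hScard
  set J := T.orderEmbOfFin hTcard
  have hJ : ∀ a, J a ∈ tall ∧ F (J a) = S := fun a =>
    mem_filter.1 (hT (T.orderEmbOfFin_mem hTcard a))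
  have hcol : ∀ a b, ∃ c, (ρ b, c) ∈ block q s (I, J a) := by
    intro a b
    have hρ : ρ b ∈ blockRows q s (I, J a) :=
      hFsub _ (hJ a).1 ((hJ a).2 ▸ S.orderEmbOfFin_mem hScard b)
    obtain ⟨p, hp, hpρ⟩ := mem_image.1 hρ
    exact ⟨p.2, by rwa [← hpρ]⟩
  choose c hc using hcol
  refine hs ⟨ρ, fun a => c a (P.symm a), ρ.strictMono, fun a a' h => ?_, fun i => ?_⟩
  · apply Nat.lt_of_div_lt_div (c := q)
    rw [(div_eq_of_mem_block (hc a _)).2, (div_eq_of_mem_block (hc a' _)).2]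
    exact J.strictMono h
  · simpa using (mem_filter.1 (hc (P i) i)).1

theorem sum_tall_le (hq : 0 < q) (hs : ¬ Contains s P) (m : ℕ) :
    ∑ B ∈ range m ×ˢ range m, (if k ≤ #(blockRows q s B) then 1 else 0) ≤
      m * ((k - 1) * q.choose k) := by
  rw [sum_product]
  refine (sum_le_sum fun I _ => ?_).trans_eq (by rw [sum_const, card_range, smul_eq_mul])
  rw [← card_filter]
  exact card_tall_le hq hs I _

theorem sum_wide_le (hq : 0 < q) (hs : ¬ Contains s P) (m : ℕ) :
    ∑ B ∈ range m ×ˢ range m, (if k ≤ #(blockCols q s B) then 1 else 0) ≤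
      m * ((k - 1) * q.choose k) := by
  have hs' : ¬ Contains (transpose s) P.symm := fun h => hs h.of_transpose
  rw [sum_product_right]
  refine (sum_le_sum fun J _ => ?_).trans_eq (by rw [sum_const, card_range, smul_eq_mul])
  simp only [blockCols_eq_blockRows_transpose]
  rw [← card_filter]
  exact card_tall_le hq hs' J _

theorem card_block_le_ite (hq : 0 < q) (B : ℕ × ℕ) :
    #(block q s B) ≤ (if k ≤ #(blockRows q s B) ∨ k ≤ #(blockCols q s B) then q * q else 0) +
      (k - 1) * (k - 1) := by
  have hr := card_blockRows_le (s := s) hq B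
  have hc := card_blockCols_le (s := s) hq B
  refine (card_block_le B).trans ?_
  split_ifs with h
  · nlinarith
  · push Not at h
    nlinarith [Nat.mul_le_mul (Nat.le_sub_one_of_lt h.1) (Nat.le_sub_one_of_lt h.2)]

theorem contract_subset (hq : 0 < q) {m : ℕ} (hsub : s ⊆ range (m * q) ×ˢ range (m * q)) :
    contract q s ⊆ range m ×ˢ range m := by
  intro B hB
  obtain ⟨p, hp, rfl⟩ := mem_image.1 hB
  obtain ⟨h1, h2⟩ := mem_product.1 (hsub hp)
  simp only [blockIndex, mem_product, mem_range, Nat.div_lt_iff_lt_mul hq] at h1 h2 ⊢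
  exact ⟨h1, h2⟩

/-- Marcus–Tardos recursion: a block containing ones in at least `k` rows or columns is rare,
and any other nonempty block has at most `(k - 1)²` ones. -/
theorem card_le_of_not_contains_contract (hq : 0 < q) (hs : ¬ Contains s P) {m : ℕ}
    (hsub : s ⊆ range (m * q) ×ˢ range (m * q)) :
    #s ≤ q * q * (2 * (m * ((k - 1) * q.choose k))) + (k - 1) * (k - 1) * #(contract q s) := by
  have hcontract := contract_subset hq hsub
  calc #s = ∑ B ∈ contract q s, #(block q s B) := card_eq_sum_card_image _ _
    _ ≤ ∑ B ∈ contract q s, ((if k ≤ #(blockRows q s B) ∨ k ≤ #(blockCols q s B) then q * q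
          else 0) + (k - 1) * (k - 1)) := sum_le_sum fun B _ => card_block_le_ite hq B
    _ ≤ ∑ B ∈ range m ×ˢ range m, q * q * ((if k ≤ #(blockRows q s B) then 1 else 0) +
          (if k ≤ #(blockCols q s B) then 1 else 0)) + (k - 1) * (k - 1) * #(contract q s) := by
      rw [sum_add_distrib, sum_const, smul_eq_mul, mul_comm #(contract q s)]
      gcongr
      refine (sum_le_sum_of_subset hcontract).trans (sum_le_sum fun B _ => ?_)
      split_ifs <;> simp_all
    _ ≤ q * q * (2 * (m * ((k - 1) * q.choose k))) + (k - 1) * (k - 1) * #(contract q s) := by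
      rw [← mul_sum, sum_add_distrib, two_mul]
      gcongr
      exacts [sum_tall_le hq hs m, sum_wide_le hq hs m]

theorem card_le_of_not_contains_pow (hkq : (k - 1) ^ 2 < q) (t : ℕ) :
    ∀ s : Finset (ℕ × ℕ), s ⊆ range (q ^ t) ×ˢ range (q ^ t) → ¬ Contains s P →
      #s ≤ (2 * (q * q * ((k - 1) * q.choose k)) + 1) * q ^ t := by
  have hq : 0 < q := by omega
  set C := 2 * (q * q * ((k - 1) * q.choose k)) + 1
  induction t with
  | zero =>
    intro s hsub _
    calc #s ≤ #(range 1 ×ˢ range 1) := card_le_card (by simpa using hsub)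
      _ = 1 := by simp
      _ ≤ C * q ^ 0 := by rw [pow_zero, mul_one]; omega
  | succ t ih =>
    intro s hsub hs
    rw [pow_succ] at hsub ⊢
    have hIH := ih (contract q s) (contract_subset hq hsub) fun h => hs h.of_contract
    have hk : (k - 1) * (k - 1) + 1 ≤ q := by rw [← sq]; omega
    have hC : q * q * (2 * (q ^ t * ((k - 1) * q.choose k))) + q ^ t = C * q ^ t := by ring
    calc #s ≤ q * q * (2 * (q ^ t * ((k - 1) * q.choose k))) +
          (k - 1) * (k - 1) * #(contract q s) :=
          card_le_of_not_contains_contract hq hs hsub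
      _ ≤ C * q ^ t + (k - 1) * (k - 1) * (C * q ^ t) :=
        add_le_add (hC ▸ Nat.le_add_right _ _) (Nat.mul_le_mul_left _ hIH)
      _ = ((k - 1) * (k - 1) + 1) * (C * q ^ t) := by ring
      _ ≤ C * (q ^ t * q) := by nlinarith

/-- The Füredi–Hajnal conjecture, proved by Marcus and Tardos. -/
theorem exists_card_le_of_not_contains (P : Equiv.Perm (Fin k)) :
    ∃ C, ∀ m (s : Finset (ℕ × ℕ)), s ⊆ range m ×ˢ range m → ¬ Contains s P → #s ≤ C * m := by
  set q := k ^ 2 + 2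
  have hkq : (k - 1) ^ 2 < q := by
    have := Nat.pow_le_pow_left (Nat.sub_le k 1) 2
    omega
  refine ⟨(2 * (q * q * ((k - 1) * q.choose k)) + 1) * q, fun m s hsub hs => ?_⟩
  rcases Nat.eq_zero_or_pos m with rfl | hm
  · simpa using card_le_card hsub
  set t := Nat.log q m + 1
  have hmt : m < q ^ t := Nat.lt_pow_succ_log_self (by omega) m
  have htm : q ^ t ≤ q * m := by
    rw [pow_succ, mul_comm]
    exact Nat.mul_le_mul_left q (Nat.pow_log_le_self q hm.ne')
  have hsub' : s ⊆ range (q ^ t) ×ˢ range (q ^ t) :=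
    hsub.trans (product_subset_product (range_subset_range.2 hmt.le) (range_subset_range.2 hmt.le))
  calc #s ≤ (2 * (q * q * ((k - 1) * q.choose k)) + 1) * q ^ t :=
        card_le_of_not_contains_pow hkq t s hsub' hs
    _ ≤ (2 * (q * q * ((k - 1) * q.choose k)) + 1) * (q * m) := Nat.mul_le_mul_left _ htm
    _ = (2 * (q * q * ((k - 1) * q.choose k)) + 1) * q * m := by ring

open scoped Classical in
noncomputable def avoiders (P : Equiv.Perm (Fin k)) (N : ℕ) : Finset (Finset (ℕ × ℕ)) :=
  {s ∈ (range N ×ˢ range N).powerset | ¬ Contains s P}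

theorem mem_avoiders {N : ℕ} {s : Finset (ℕ × ℕ)} :
    s ∈ avoiders P N ↔ s ⊆ range N ×ˢ range N ∧ ¬ Contains s P := by
  simp [avoiders]

theorem avoiders_mono {N N' : ℕ} (h : N ≤ N') : avoiders P N ⊆ avoiders P N' := by
  intro s hs
  rw [mem_avoiders] at hs ⊢
  have := range_subset_range.2 h
  exact ⟨hs.1.trans (product_subset_product this this), hs.2⟩

theorem card_avoiders_le_two_pow (N : ℕ) : #(avoiders P N) ≤ 2 ^ (N * N) :=
  (card_le_card fun _ hs => mem_powerset.2 (mem_avoiders.1 hs).1).trans (by simp)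

def blowup (q : ℕ) (t : Finset (ℕ × ℕ)) : Finset (ℕ × ℕ) :=
  t.biUnion fun B => Ico (B.1 * q) (B.1 * q + q) ×ˢ Ico (B.2 * q) (B.2 * q + q)

theorem card_blowup_le (t : Finset (ℕ × ℕ)) : #(blowup q t) ≤ q * q * #t :=
  card_biUnion_le.trans (by simp [mul_comm])

theorem subset_blowup_contract (hq : 0 < q) (s : Finset (ℕ × ℕ)) :
    s ⊆ blowup q (contract q s) := fun p hp =>
  mem_biUnion.2 ⟨blockIndex q p, mem_image_of_mem _ hp,
    mem_product.2 ⟨(mem_Ico_iff_div_eq hq).2 rfl, (mem_Ico_iff_div_eq hq).2 rfl⟩⟩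

/-- Klazar's reduction: an avoider of size `2m` is determined by its contraction, an avoider of
size `m` with at most `C m` ones, and by its ones inside the `2 × 2` blocks of those ones. -/
theorem card_avoiders_two_mul_le {C : ℕ}
    (hC : ∀ m (s : Finset (ℕ × ℕ)), s ⊆ range m ×ˢ range m → ¬ Contains s P → #s ≤ C * m)
    (m : ℕ) : #(avoiders P (2 * m)) ≤ 2 ^ (4 * (C * m)) * #(avoiders P m) := by
  have hmaps : (avoiders P (2 * m)).image (contract 2) ⊆ avoiders P m := by
    intro t ht
    obtain ⟨s, hs, rfl⟩ := mem_image.1 ht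
    rw [mem_avoiders] at hs ⊢
    exact ⟨contract_subset two_pos (by rw [mul_comm m 2]; exact hs.1), fun h => hs.2 h.of_contract⟩
  refine (card_le_mul_card_image _ _ fun t ht => ?_).trans
    (Nat.mul_le_mul_left _ (card_le_card hmaps))
  obtain ⟨ht, ht'⟩ := mem_avoiders.1 (hmaps ht)
  calc #{s ∈ avoiders P (2 * m) | contract 2 s = t} ≤ #(blowup 2 t).powerset :=
        card_le_card fun s hs => mem_powerset.2 <|
          (mem_filter.1 hs).2 ▸ subset_blowup_contract two_pos s
    _ ≤ 2 ^ (4 * (C * m)) := by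
      rw [card_powerset]
      exact Nat.pow_le_pow_right two_pos ((card_blowup_le t).trans (by nlinarith [hC m t ht ht']))

theorem exists_card_avoiders_le (P : Equiv.Perm (Fin k)) : ∃ K, ∀ N, #(avoiders P N) ≤ K ^ N := by
  obtain ⟨C, hC⟩ := exists_card_le_of_not_contains P
  refine ⟨2 ^ (12 * C + 1), fun N => ?_⟩
  induction N using Nat.strong_induction_on with
  | _ N ih =>
    rcases lt_or_ge N 2 with hN | hN
    · refine (card_avoiders_le_two_pow N).trans ?_
      interval_cases N
      · simp
      · simpa using Nat.le_self_pow (by omega : 12 * C + 1 ≠ 0) 2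
    set m := (N + 1) / 2
    calc #(avoiders P N) ≤ #(avoiders P (2 * m)) := card_le_card (avoiders_mono (by omega))
      _ ≤ 2 ^ (4 * (C * m)) * (2 ^ (12 * C + 1)) ^ m :=
        (card_avoiders_two_mul_le hC m).trans (Nat.mul_le_mul_left _ (ih m (by omega)))
      _ = 2 ^ (4 * (C * m) + (12 * C + 1) * m) := by rw [← pow_mul, ← pow_add]
      _ ≤ (2 ^ (12 * C + 1)) ^ N := by
        rw [← pow_mul]
        refine Nat.pow_le_pow_right two_pos ?_
        nlinarith [Nat.mul_le_mul_left (4 * C) (show 4 * m ≤ 3 * N by omega), show m ≤ N by omega]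

end ZeroOneMatrix

open ZeroOneMatrix

def permGraph {n : ℕ} (π : Equiv.Perm (Fin n)) : Finset (ℕ × ℕ) :=
  univ.image fun i : Fin n => ((i : ℕ), (π i : ℕ))

theorem permGraph_injective {n : ℕ} : Function.Injective (permGraph (n := n)) := by
  intro π π' h
  ext i
  have hi : ((i : ℕ), (π i : ℕ)) ∈ permGraph π' := by
    rw [← h]; exact mem_image_of_mem _ (mem_univ i)
  obtain ⟨j, -, hj⟩ := mem_image.1 hi
  obtain ⟨hji, hπ⟩ := Prod.ext_iff.1 hj
  rw [Fin.ext hji] at hπ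
  exact hπ.symm

theorem permContains_of_contains_permGraph {n k : ℕ} {π : Equiv.Perm (Fin n)}
    {τ : Equiv.Perm (Fin k)} (h : Contains (permGraph π) τ) : PermContains π τ := by
  obtain ⟨r, c, hr, hc, hrc⟩ := h
  choose f _ hf using fun i => mem_image.1 (hrc i)
  have hfr : ∀ i, (f i : ℕ) = r i := fun i => congrArg Prod.fst (hf i)
  have hfc : ∀ i, (π (f i) : ℕ) = c (τ i) := fun i => congrArg Prod.snd (hf i)
  refine ⟨f, fun i i' h => ?_, fun s t => ?_⟩
  · rw [Fin.lt_def, hfr, hfr]; exact hr h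
  · rw [← hc.lt_iff_lt, ← hfc, ← hfc, Fin.val_fin_lt]

theorem exists_card_avoiding_perm_le {k : ℕ} (τ : Equiv.Perm (Fin k)) :
    ∃ K, ∀ n, Nat.card {π : Equiv.Perm (Fin n) // ¬ PermContains π τ} ≤ K ^ n := by
  obtain ⟨K, hK⟩ := exists_card_avoiders_le τ
  refine ⟨K, fun n => ?_⟩
  have hmem : ∀ π : {π : Equiv.Perm (Fin n) // ¬ PermContains π τ}, permGraph π.1 ∈ avoiders τ n :=
    fun π => mem_avoiders.2 ⟨fun p hp => by
      obtain ⟨i, -, rfl⟩ := mem_image.1 hp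
      simp, fun h => π.2 (permContains_of_contains_permGraph h)⟩
  calc Nat.card {π : Equiv.Perm (Fin n) // ¬ PermContains π τ} ≤ Nat.card (avoiders τ n) :=
        Nat.card_le_card_of_injective (fun π => ⟨permGraph π.1, hmem π⟩)
          fun π π' h => Subtype.ext (permGraph_injective (congrArg Subtype.val h))
    _ ≤ K ^ n := (Nat.card_eq_finsetCard _).trans_le (hK n)

section BoundedAffine

variable {n : ℕ} {σ σ' : ℤ → ℤ}

theorem map_add_mul_of_map_add (hσ : ∀ i : ℤ, σ (i + n) = σ i + n) (i t : ℤ) :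
    σ (i + t * n) = σ i + t * n := by
  have hper : Function.Periodic (fun i => σ i - i) (n : ℤ) := fun i => by
    simp only [hσ]; ring
  have : σ (i + t * n) - (i + t * n) = σ i - i := hper.int_mul t i
  linarith

theorem exists_eq_fin_add_mul (hn : 0 < n) (i : ℤ) : ∃ (j : Fin n) (t : ℤ), i = j + 1 + t * n := by
  have hn' : (0 : ℤ) < n := by exact_mod_cast hn
  refine ⟨⟨((i - 1) % n).toNat, by have := Int.emod_lt_of_pos (i - 1) hn'; omega⟩, (i - 1) / n, ?_⟩
  have := Int.emod_add_mul_ediv (i - 1) n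
  simp only [Int.toNat_of_nonneg (Int.emod_nonneg _ hn'.ne')]
  linarith

theorem IsBoundedAffinePerm.pos (h : IsBoundedAffinePerm n σ) : 0 < n := by
  have := h.2 0
  have : (0 : ℤ) < n := (abs_nonneg _).trans_lt this
  exact_mod_cast this

def window (n : ℕ) (σ : ℤ → ℤ) (j : Fin n) : ℤ := σ (j + 1)

def windowSet (n : ℕ) (σ : ℤ → ℤ) : Finset ℤ := univ.image (window n σ)

/-- `windowPattern n σ j` is the rank of `σ (j + 1)` among `σ 1, …, σ n`. -/
noncomputable def windowPattern (n : ℕ) (σ : ℤ → ℤ) : Equiv.Perm (Fin n) :=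
  (Tuple.sort (window n σ)).symm

theorem window_injective (hσ : Function.Injective σ) : Function.Injective (window n σ) :=
  fun j j' h => Fin.ext (by exact_mod_cast add_right_cancel (hσ h))

theorem strictMono_window_comp_sort (hw : Function.Injective (window n σ)) :
    StrictMono (window n σ ∘ Tuple.sort (window n σ)) :=
  (Tuple.monotone_sort _).strictMono_of_injective (hw.comp (Equiv.injective _))

theorem windowPattern_lt_iff (hw : Function.Injective (window n σ)) (j j' : Fin n) :
    windowPattern n σ j < windowPattern n σ j' ↔ window n σ j < window n σ j' := by
  have h := (strictMono_window_comp_sort hw).lt_iff_lt (a := windowPattern n σ j)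
    (b := windowPattern n σ j')
  simpa [windowPattern] using h.symm

theorem not_permContains_windowPattern {k : ℕ} {τ : Equiv.Perm (Fin k)}
    (hw : Function.Injective (window n σ)) (h : ¬ AffContains σ τ) :
    ¬ PermContains (windowPattern n σ) τ := by
  rintro ⟨f, hf, hfτ⟩
  refine h ⟨fun s => (f s : ℤ) + 1, fun s t hst => ?_, fun s t => ?_⟩
  · have : (f s : ℕ) < f t := hf hst
    simp only
    omega
  · rw [hfτ, windowPattern_lt_iff hw]
    rfl

theorem window_eq_of_windowSet_eq (hw : Function.Injective (window n σ))
    (hw' : Function.Injective (window n σ')) (hS : windowSet n σ = windowSet n σ')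
    (hP : windowPattern n σ = windowPattern n σ') : window n σ = window n σ' := by
  have hsort : Tuple.sort (window n σ) = Tuple.sort (window n σ') := by
    simpa [windowPattern] using congrArg Equiv.symm hP
  have hrange : Set.range (window n σ ∘ Tuple.sort (window n σ)) =
      Set.range (window n σ' ∘ Tuple.sort (window n σ')) := by
    simpa [EquivLike.range_comp, windowSet, ← coe_inj] using hS
  have hcomp :=
    ((strictMono_window_comp_sort hw).range_inj (strictMono_window_comp_sort hw')).1 hrange
  rw [hsort] at hcomp
  exact (Tuple.sort _).surjective.injective_comp_right hcomp

theorem eq_of_window_eq (hn : 0 < n) (hσ : ∀ i : ℤ, σ (i + n) = σ i + n)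
    (hσ' : ∀ i : ℤ, σ' (i + n) = σ' i + n) (h : window n σ = window n σ') : σ = σ' := by
  funext i
  obtain ⟨j, t, rfl⟩ := exists_eq_fin_add_mul hn i
  rw [map_add_mul_of_map_add hσ, map_add_mul_of_map_add hσ']
  exact congrArg (· + t * n) (congrFun h j)

/-- The candidate value sets of a window: one value in each residue class mod `n`, taken from one
of the three blocks `(-n, 0]`, `(0, n]`, `(n, 2n]` to which boundedness confines the window. -/
def blockSet (n : ℕ) (e : Fin n → Fin 3) : Finset ℤ :=
  univ.image fun r : Fin n => (r : ℤ) + 1 + n * ((e r : ℤ) - 1)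

theorem card_blockSet (e : Fin n → Fin 3) : #(blockSet n e) = n := by
  rw [blockSet, card_image_of_injective _ fun r r' h => ?_, card_fin]
  have hr := r.2
  have hr' := r'.2
  have he : (e r : ℤ) = e r' := by
    by_contra hne
    rcases lt_or_gt_of_ne hne with h' | h' <;> nlinarith
  exact Fin.ext (by simpa [he] using h)

theorem exists_window_eq_block (h : IsBoundedAffinePerm n σ) (r : Fin n) :
    ∃ (j : Fin n) (b : Fin 3), window n σ j = r + 1 + n * ((b : ℤ) - 1) := by
  obtain ⟨i, hi⟩ := h.1.1.2 (r + 1)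
  obtain ⟨j, t, rfl⟩ := exists_eq_fin_add_mul h.pos i
  have hj : σ (j + 1) = r + 1 - t * n := by
    rw [← hi, map_add_mul_of_map_add h.1.2.1]; ring
  have hbd := abs_lt.1 (h.2 (j + 1))
  have hr := r.2
  have hj' := j.2
  have ht : -1 ≤ t ∧ t ≤ 1 := by constructor <;> nlinarith
  refine ⟨j, ⟨(1 - t).toNat, by omega⟩, ?_⟩
  rw [window, hj, Fin.val_mk, Int.toNat_of_nonneg (by omega)]
  ring

theorem exists_blockSet_eq_windowSet (h : IsBoundedAffinePerm n σ) :
    ∃ e, blockSet n e = windowSet n σ := by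
  choose j e he using exists_window_eq_block h
  refine ⟨e, eq_of_subset_of_card_le (fun x hx => ?_) ?_⟩
  · obtain ⟨r, -, rfl⟩ := mem_image.1 hx
    exact he r ▸ mem_image_of_mem _ (mem_univ _)
  · rw [card_blockSet]
    exact card_image_le.trans_eq (card_fin n)

theorem card_boundedAffinePerm_not_affContains_le {k : ℕ} (τ : Equiv.Perm (Fin k)) (n : ℕ) :
    Nat.card {σ : ℤ → ℤ // IsBoundedAffinePerm n σ ∧ ¬ AffContains σ τ} ≤
      3 ^ n * Nat.card {π : Equiv.Perm (Fin n) // ¬ PermContains π τ} := by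
  let T : Finset (Finset ℤ) := univ.image (blockSet n)
  let encode (σ : {σ : ℤ → ℤ // IsBoundedAffinePerm n σ ∧ ¬ AffContains σ τ}) :
      T × {π : Equiv.Perm (Fin n) // ¬ PermContains π τ} :=
    (⟨windowSet n σ, by
        obtain ⟨e, he⟩ := exists_blockSet_eq_windowSet σ.2.1
        exact he ▸ mem_image_of_mem _ (mem_univ e)⟩,
      ⟨windowPattern n σ, not_permContains_windowPattern (window_injective σ.2.1.1.1.1) σ.2.2⟩)
  have hencode : Function.Injective encode := by
    intro σ σ' h
    simp only [encode, Prod.mk.injEq, Subtype.mk.injEq] at h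
    have hσ := σ.2.1
    have hσ' := σ'.2.1
    exact Subtype.ext <| eq_of_window_eq hσ.pos hσ.1.2.1 hσ'.1.2.1 <|
      window_eq_of_windowSet_eq (window_injective hσ.1.1.1) (window_injective hσ'.1.1.1) h.1 h.2
  calc _ ≤ Nat.card (T × {π : Equiv.Perm (Fin n) // ¬ PermContains π τ}) :=
        Nat.card_le_card_of_injective encode hencode
    _ = #T * Nat.card {π : Equiv.Perm (Fin n) // ¬ PermContains π τ} := by
      rw [Nat.card_prod, Nat.card_eq_finsetCard]
    _ ≤ 3 ^ n * Nat.card {π : Equiv.Perm (Fin n) // ¬ PermContains π τ} := by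
      gcongr
      exact card_image_le.trans_eq (by simp)

end BoundedAffine

open Filter in
theorem limsup_le_mul_limsup {ι : Type*} {l : Filter ι} [l.NeBot] {u v : ι → ℝ} {c : ℝ}
    (hc : 0 ≤ c) (hu : 0 ≤ u) (hv : 0 ≤ v) (hvb : IsBoundedUnder (· ≤ ·) l v)
    (huv : ∀ᶠ i in l, u i ≤ c * v i) : limsup u l ≤ c * limsup v l := by
  have hmul : Monotone (c * ·) := fun _ _ h => mul_le_mul_of_nonneg_left h hc
  rw [hmul.map_limsup_of_continuousAt v (continuous_const_mul c).continuousAt hvb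
    (isBoundedUnder_of ⟨0, hv⟩).isCoboundedUnder_flip]
  exact limsup_le_limsup huv (isBoundedUnder_of ⟨0, hu⟩).isCoboundedUnder_flip
    (hmul.isBoundedUnder_le_comp hvb)

theorem rpow_one_div_le_mul_of_le_pow_mul {a b c : ℝ} {n : ℕ} (hn : n ≠ 0) (ha : 0 ≤ a)
    (hb : 0 ≤ b) (hc : 0 ≤ c) (h : a ≤ c ^ n * b) :
    a ^ (1 / (n : ℝ)) ≤ c * b ^ (1 / (n : ℝ)) := by
  calc a ^ (1 / (n : ℝ)) ≤ (c ^ n * b) ^ (1 / (n : ℝ)) := by gcongr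
    _ = c * b ^ (1 / (n : ℝ)) := by
      rw [Real.mul_rpow (by positivity) hb, one_div, Real.pow_rpow_inv_natCast hc hn]

theorem stmt0_general {k : ℕ} (τ : Equiv.Perm (Fin k)) :
    (∀ n : ℕ, 1 ≤ n →
      Nat.card {σ : ℤ → ℤ // IsBoundedAffinePerm n σ ∧ ¬ AffContains σ τ} ≤
        3 ^ n * Nat.card {π : Equiv.Perm (Fin n) // ¬ PermContains π τ}) ∧
    Filter.limsup (fun n : ℕ =>
        (Nat.card {σ : ℤ → ℤ // IsBoundedAffinePerm n σ ∧ ¬ AffContains σ τ} : ℝ)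
          ^ (1 / (n : ℝ))) Filter.atTop ≤
      3 * Filter.limsup (fun n : ℕ =>
        (Nat.card {π : Equiv.Perm (Fin n) // ¬ PermContains π τ} : ℝ)
          ^ (1 / (n : ℝ))) Filter.atTop := by
  have hcount := card_boundedAffinePerm_not_affContains_le τ
  obtain ⟨K, hK⟩ := exists_card_avoiding_perm_le τ
  refine ⟨fun n _ => hcount n, limsup_le_mul_limsup (by norm_num) (fun n => by positivity)
    (fun n => by positivity) (Filter.isBoundedUnder_of_eventually_le (a := (K : ℝ)) ?_) ?_⟩
  · filter_upwards [Filter.eventually_ne_atTop 0] with n hn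
    simpa using rpow_one_div_le_mul_of_le_pow_mul hn (Nat.cast_nonneg _) zero_le_one
      (Nat.cast_nonneg K) (by simpa using (by exact_mod_cast hK n : (_ : ℝ) ≤ (K : ℝ) ^ n))
  · filter_upwards [Filter.eventually_ne_atTop 0] with n hn
    exact rpow_one_div_le_mul_of_le_pow_mul hn (Nat.cast_nonneg _) (Nat.cast_nonneg _)
      (by norm_num) (by exact_mod_cast hcount n)

/-- `|S̃//ₙ(τ)| ≤ 3ⁿ·|Sₙ(τ)|` for all `n ≥ 1`, and consequently
`limsup |S̃//ₙ(τ)|^{1/n} ≤ 3·limsup |Sₙ(τ)|^{1/n}`. -/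
theorem stmt0 {k : ℕ} (hk : 1 ≤ k) (τ : Equiv.Perm (Fin k)) :
    (∀ n : ℕ, 1 ≤ n →
      Nat.card {σ : ℤ → ℤ // IsBoundedAffinePerm n σ ∧ ¬ AffContains σ τ} ≤
        3 ^ n * Nat.card {π : Equiv.Perm (Fin n) // ¬ PermContains π τ}) ∧
    Filter.limsup (fun n : ℕ =>
        (Nat.card {σ : ℤ → ℤ // IsBoundedAffinePerm n σ ∧ ¬ AffContains σ τ} : ℝ)
          ^ (1 / (n : ℝ))) Filter.atTop ≤
      3 * Filter.limsup (fun n : ℕ =>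
        (Nat.card {π : Equiv.Perm (Fin n) // ¬ PermContains π τ} : ℝ)
          ^ (1 / (n : ℝ))) Filter.atTop :=
  stmt0_general τ
end

section
/- Let C be a sum closed permutation class, and set f_j = |C_j| (with f_0 = 1), g_j = |ind(C)_j|, and ˜f_n = |aff(C)_n|. Then for every n ≥ 1, ˜f_n = ∑_{k=1}^n k · g_k · f_{n−k}. -/
/-!
An affine permutation `σ = Σ^r(⊕π)` splits `ℤ` into blocks, separated by its cuts: the `c` with
`σ((-∞, c]) = (-∞, c]`. Cuts are `n`-periodic, so `σ` is determined by its least nonnegative cut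
`r < n` and its pattern `π'` on `(r, r + n]`, which lies in `C` because it is contained in a sum of
copies of `π`. Writing `π' = β ⊕ α` with `α` the last sum-indecomposable block, of size `k`, the
minimality of `r` says exactly that `r < k`. Conversely every such `(k, α, β, r)` gives a distinct
element of `aff(C)_n`, and there are `k · g_k · f_{n-k}` of them for each `k`.
-/

namespace AffinePerm

open Equiv Function Finset

section Periodic

variable {σ : ℤ → ℤ} {n : ℤ}

theorem map_add_mul (h : ∀ i, σ (i + n) = σ i + n) (q i : ℤ) :
    σ (i + q * n) = σ i + q * n := by
  have hper : Periodic (fun i => σ i - i) n := fun i => by simp only [h]; ring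
  have := hper.zsmul q i
  simp only [smul_eq_mul] at this
  linarith

theorem sum_Ico_add_of_periodic {M : Type*} [AddCommMonoid M] {g : ℤ → M}
    (hg : Periodic g n) (hn : 0 ≤ n) (a : ℤ) :
    ∑ i ∈ Ico a (a + n), g i = ∑ i ∈ Ico 0 n, g i := by
  have hinj : Set.InjOn (· % n) (Ico a (a + n) : Set ℤ) := by
    rw [← card_image_iff, Int.image_Ico_emod a n hn]
    simp
  rw [← Int.image_Ico_emod a n hn, sum_image hinj]
  refine sum_congr rfl fun i _ => ?_
  rw [Int.emod_def, mul_comm, ← smul_eq_mul, hg.sub_zsmul_eq]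

end Periodic

def IsCut (σ : ℤ → ℤ) (c : ℤ) : Prop := ∀ i, σ i ≤ c ↔ i ≤ c

namespace IsCut

variable {σ : ℤ → ℤ} {c : ℤ}

protected theorem shiftPerm (h : IsCut σ c) (r : ℤ) : IsCut (shiftPerm r σ) (c + r) := by
  intro i
  have := h (i - r)
  simp only [_root_.shiftPerm]
  omega

theorem add_mul {n : ℤ} (hσ : ∀ i, σ (i + n) = σ i + n) (h : IsCut σ c) (q : ℤ) :
    IsCut σ (c + q * n) := by
  intro i
  have := h (i - q * n)
  have := map_add_mul hσ q (i - q * n)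
  rw [sub_add_cancel] at this
  omega

theorem image_Ioc (hinj : Injective σ) {a b : ℤ} (ha : IsCut σ a) (hb : IsCut σ b) :
    (Ioc a b).image σ = Ioc a b := by
  refine eq_of_subset_of_card_le (fun y hy => ?_) (card_image_of_injective _ hinj).ge
  obtain ⟨i, hi, rfl⟩ := mem_image.mp hy
  have := ha i
  have := hb i
  simp only [mem_Ioc] at hi ⊢
  omega

end IsCut

section Shift

variable {σ : ℤ → ℤ}

theorem shiftPerm_bijective (h : Bijective σ) (r : ℤ) : Bijective (shiftPerm r σ) := by
  refine ⟨fun a b hab => ?_, fun y => ?_⟩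
  · have := h.injective (show σ (a - r) = σ (b - r) by simp only [_root_.shiftPerm] at hab; omega)
    omega
  · obtain ⟨x, hx⟩ := h.surjective (y - r)
    exact ⟨x + r, by simp [_root_.shiftPerm, hx]⟩

theorem shiftPerm_map_add {n : ℤ} (hσ : ∀ i, σ (i + n) = σ i + n) (r i : ℤ) :
    shiftPerm r σ (i + n) = shiftPerm r σ i + n := by
  simp only [_root_.shiftPerm, show i + n - r = i - r + n by ring, hσ]
  ring

theorem shiftPerm_add_mul {n : ℤ} (hσ : ∀ i, σ (i + n) = σ i + n) (r q : ℤ) :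
    shiftPerm (r + q * n) σ = shiftPerm r σ := by
  funext i
  have := map_add_mul hσ q (i - (r + q * n))
  simp only [_root_.shiftPerm, show i - (r + q * n) + q * n = i - r by ring] at this ⊢
  linarith

theorem shiftPerm_zero (σ : ℤ → ℤ) : shiftPerm 0 σ = σ := by
  funext i
  simp [shiftPerm]

theorem isAffinePerm_of_isCut {n : ℕ} (hbij : Bijective σ) (hσ : ∀ i, σ (i + n) = σ i + n)
    {c : ℤ} (hc : IsCut σ c) : IsAffinePerm n σ := by
  refine ⟨hbij, hσ, ?_⟩
  have hper : Periodic (fun i => σ i - i) n := fun i => by simp only [hσ]; ring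
  have hIoc (a : ℤ) : Ioc a (a + n) = Ico (a + 1) (a + 1 + n) := by
    ext
    simp only [mem_Ioc, mem_Ico]
    omega
  have hperm : ∑ i ∈ Ioc c (c + n), σ i = ∑ i ∈ Ioc c (c + n), i := by
    conv_rhs => rw [← hc.image_Ioc hbij.injective (by simpa using hc.add_mul hσ 1)]
    rw [sum_image hbij.injective.injOn]
  have hwindow : ∑ i ∈ Ioc 0 (0 + (n : ℤ)), (σ i - i) = ∑ i ∈ Ioc c (c + n), (σ i - i) := by
    rw [hIoc, hIoc, sum_Ico_add_of_periodic hper (by positivity),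
      sum_Ico_add_of_periodic hper (by positivity)]
  have hIcc : Icc (1 : ℤ) n = Ioc 0 (0 + (n : ℤ)) := by
    ext
    simp only [mem_Icc, mem_Ioc]
    omega
  rw [← sub_eq_zero, ← sum_sub_distrib, hIcc, hwindow, sum_sub_distrib, hperm, sub_self]

end Shift

theorem exists_eq_one_add_add_mul {n : ℕ} (hn : 0 < n) (i : ℤ) :
    ∃ (j : Fin n) (q : ℤ), i = 1 + j + n * q := by
  have hn' : (0 : ℤ) < n := by exact_mod_cast hn
  have := Int.emod_nonneg (i - 1) hn'.ne'
  have := Int.emod_lt_of_pos (i - 1) hn'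
  refine ⟨⟨((i - 1) % n).toNat, by omega⟩, (i - 1) / n, ?_⟩
  have := Int.mul_ediv_add_emod (i - 1) n
  simp only
  omega

section InfiniteSum

variable {n : ℕ} (hn : 0 < n) (π : Perm (Fin n))

theorem infiniteSum_apply (j : Fin n) (q : ℤ) :
    infiniteSum hn π (1 + j + n * q) = π j + 1 + n * q := by
  have hn' : (0 : ℤ) < n := by exact_mod_cast hn
  have hj : (j : ℤ) < n := by exact_mod_cast j.isLt
  have hsub : 1 + (j : ℤ) + n * q - 1 = j + n * q := by ring
  have hmod : (j + n * q) % (n : ℤ) = j := by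
    rw [Int.add_mul_emod_self_left, Int.emod_eq_of_lt (by positivity) hj]
  have hdiv : (j + n * q) / (n : ℤ) = q := by
    rw [Int.add_mul_ediv_left _ _ hn'.ne', Int.ediv_eq_zero_of_lt (by positivity) hj, zero_add]
  simp only [infiniteSum, hsub, hmod, hdiv, Int.toNat_natCast, Fin.eta]

theorem infiniteSum_add (i : ℤ) : infiniteSum hn π (i + n) = infiniteSum hn π i + n := by
  obtain ⟨j, q, rfl⟩ := exists_eq_one_add_add_mul hn i
  rw [show 1 + (j : ℤ) + n * q + n = 1 + j + n * (q + 1) by ring, infiniteSum_apply,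
    infiniteSum_apply]
  ring

theorem infiniteSum_inv_apply (i : ℤ) : infiniteSum hn π⁻¹ (infiniteSum hn π i) = i := by
  obtain ⟨j, q, rfl⟩ := exists_eq_one_add_add_mul hn i
  rw [infiniteSum_apply, add_comm (π j : ℤ) 1, infiniteSum_apply]
  simp only [Perm.coe_inv, symm_apply_apply]
  ring

theorem infiniteSum_bijective : Bijective (infiniteSum hn π) := by
  refine ⟨LeftInverse.injective (infiniteSum_inv_apply hn π), fun i => ?_⟩
  simpa using ⟨_, infiniteSum_inv_apply hn π⁻¹ i⟩

theorem isCut_infiniteSum : IsCut (infiniteSum hn π) 0 := by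
  intro i
  obtain ⟨j, q, rfl⟩ := exists_eq_one_add_add_mul hn i
  rw [infiniteSum_apply]
  have hj : (j : ℤ) < n := by exact_mod_cast j.isLt
  have hπj : (π j : ℤ) < n := by exact_mod_cast (π j).isLt
  have key (x : ℤ) (hx0 : 0 ≤ x) (hx : x < n) : x + 1 + n * q ≤ 0 ↔ q < 0 := by
    constructor <;> intro h
    · by_contra! hq; nlinarith
    · nlinarith
  rw [key _ (by positivity) hπj, ← key _ (by positivity) hj, add_comm (j : ℤ) 1]

theorem isCut_shiftPerm_infiniteSum (r q : ℤ) :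
    IsCut (shiftPerm r (infiniteSum hn π)) (r + q * n) := by
  simpa [add_comm] using ((isCut_infiniteSum hn π).shiftPerm r).add_mul
    (shiftPerm_map_add (infiniteSum_add hn π) r) q

theorem isAffinePerm_shiftPerm_infiniteSum (r : ℤ) :
    IsAffinePerm n (shiftPerm r (infiniteSum hn π)) :=
  isAffinePerm_of_isCut (shiftPerm_bijective (infiniteSum_bijective hn π) r)
    (shiftPerm_map_add (infiniteSum_add hn π) r) ((isCut_infiniteSum hn π).shiftPerm r)

end InfiniteSum

section PermDirectSum

variable {a b : ℕ}

@[simp]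
theorem permDirectSum_castAdd (β : Perm (Fin a)) (α : Perm (Fin b)) (i : Fin a) :
    permDirectSum β α (Fin.castAdd b i) = Fin.castAdd b (β i) := by
  simp [permDirectSum]

@[simp]
theorem permDirectSum_natAdd (β : Perm (Fin a)) (α : Perm (Fin b)) (i : Fin b) :
    permDirectSum β α (Fin.natAdd a i) = Fin.natAdd a (α i) := by
  simp [permDirectSum]

theorem isPrefixInvariant_permCongr_finCongr (h : a = b) (π : Perm (Fin a)) (d : ℕ) :
    IsPrefixInvariant ((finCongr h).permCongr π) d ↔ IsPrefixInvariant π d := by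
  subst h
  rfl

theorem isPrefixInvariant_permDirectSum (β : Perm (Fin a)) (α : Perm (Fin b)) :
    IsPrefixInvariant (permDirectSum β α) a := by
  intro i
  refine Fin.addCases (fun i => ?_) (fun i => ?_) i <;> simp

theorem _root_.IsPrefixInvariant.of_permDirectSum {β : Perm (Fin a)} {α : Perm (Fin b)} {d : ℕ}
    (h : IsPrefixInvariant (permDirectSum β α) d) (had : a ≤ d) : IsPrefixInvariant α (d - a) := by
  intro i
  have := h (Fin.natAdd a i)
  simp only [permDirectSum_natAdd, Fin.val_natAdd] at this
  omega

theorem permDirectSum_injective {β β' : Perm (Fin a)} {α α' : Perm (Fin b)}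
    (h : permDirectSum β α = permDirectSum β' α') : β = β' ∧ α = α' := by
  constructor <;> ext i
  · simpa using congr(($h (Fin.castAdd b i) : ℕ))
  · simpa using congr(($h (Fin.natAdd a i) : ℕ))

end PermDirectSum

section Window

def windowFun (σ : ℤ → ℤ) (c : ℤ) (n : ℕ) (j : Fin n) : Fin n :=
  ⟨min (σ (c + 1 + j) - (c + 1)).toNat (n - 1), by have := j.pos; omega⟩

/-- The pattern of `σ` on the window `(c, c + n]`; it is meaningful when `c` and `c + n` are cuts
of an injective `σ`, and is junk (the identity) otherwise. -/
noncomputable def window (σ : ℤ → ℤ) (c : ℤ) (n : ℕ) : Perm (Fin n) :=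
  if h : Bijective (windowFun σ c n) then Equiv.ofBijective _ h else 1

variable {σ : ℤ → ℤ} {c : ℤ} {n : ℕ}

theorem coe_windowFun (h₁ : IsCut σ c) (h₂ : IsCut σ (c + n)) (j : Fin n) :
    (windowFun σ c n j : ℤ) = σ (c + 1 + j) - (c + 1) := by
  have := h₁ (c + 1 + j)
  have := h₂ (c + 1 + j)
  have := j.isLt
  simp only [windowFun]
  omega

theorem window_coe (hinj : Injective σ) (h₁ : IsCut σ c) (h₂ : IsCut σ (c + n)) (j : Fin n) :
    (window σ c n j : ℤ) = σ (c + 1 + j) - (c + 1) := by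
  have hbij : Bijective (windowFun σ c n) := by
    refine Finite.injective_iff_bijective.mp fun a b hab => ?_
    have ha := coe_windowFun h₁ h₂ a
    have hb := coe_windowFun h₁ h₂ b
    have := hinj (show σ (c + 1 + a) = σ (c + 1 + b) by rw [hab] at ha; omega)
    omega
  rw [window, dif_pos hbij, ofBijective_apply, coe_windowFun h₁ h₂]

theorem window_eq_permCongr {a b : ℕ} (h : a = b) :
    window σ c b = (finCongr h).permCongr (window σ c a) := by
  subst h
  rfl

theorem eq_shiftPerm_infiniteSum_window (hn : 0 < n) (hinj : Injective σ)
    (hσ : ∀ i, σ (i + n) = σ i + n) (hc : IsCut σ c) :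
    σ = shiftPerm c (infiniteSum hn (window σ c n)) := by
  funext i
  obtain ⟨j, q, hi⟩ := exists_eq_one_add_add_mul hn (i - c)
  have hw := window_coe hinj hc (by simpa using hc.add_mul hσ 1) j
  have := map_add_mul hσ q (c + 1 + j)
  rw [shiftPerm, hi, infiniteSum_apply, show i = c + 1 + j + q * n by linarith]
  linarith

theorem window_shiftPerm_infiniteSum (hn : 0 < n) (π : Perm (Fin n)) (r : ℤ) :
    window (shiftPerm r (infiniteSum hn π)) r n = π := by
  have h₁ : IsCut (shiftPerm r (infiniteSum hn π)) r := by
    simpa using isCut_shiftPerm_infiniteSum hn π r 0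
  have h₂ : IsCut (shiftPerm r (infiniteSum hn π)) (r + n) := by
    simpa using isCut_shiftPerm_infiniteSum hn π r 1
  ext j
  have hw := window_coe (shiftPerm_bijective (infiniteSum_bijective hn π) r).injective h₁ h₂ j
  rw [shiftPerm, show r + 1 + j - r = 1 + j + n * 0 by ring, infiniteSum_apply] at hw
  omega

theorem window_add (hinj : Injective σ) {a b : ℕ} (h₁ : IsCut σ c) (h₂ : IsCut σ (c + a))
    (h₃ : IsCut σ (c + a + b)) :
    window σ c (a + b) = permDirectSum (window σ c a) (window σ (c + a) b) := by
  have h₃' : IsCut σ (c + (a + b : ℕ)) := by rwa [Nat.cast_add, ← add_assoc]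
  ext j
  refine Fin.addCases (fun i => ?_) (fun i => ?_) j
  · have := window_coe hinj h₁ h₃' (Fin.castAdd b i)
    have := window_coe hinj h₁ h₂ i
    simp only [permDirectSum_castAdd, Fin.val_castAdd] at *
    omega
  · have := window_coe hinj h₁ h₃' (Fin.natAdd a i)
    have := window_coe hinj h₂ h₃ i
    simp only [permDirectSum_natAdd, Fin.val_natAdd, Nat.cast_add, ← add_assoc] at *
    rw [add_right_comm c 1] at *
    omega

theorem permContains_window (hinj : Injective σ) {N t : ℕ} (h₁ : IsCut σ c)
    (h₂ : IsCut σ (c + N)) (h₃ : IsCut σ (c + t)) (h₄ : IsCut σ (c + t + n)) (hle : t + n ≤ N) :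
    PermContains (window σ c N) (window σ (c + t) n) := by
  refine ⟨fun j => Fin.castLE hle (Fin.natAdd t j), fun x y hxy => ?_, fun s u => ?_⟩
  · simp only [Fin.lt_def, Fin.val_castLE, Fin.val_natAdd] at hxy ⊢
    omega
  · have hs := window_coe hinj h₃ h₄ s
    have hu := window_coe hinj h₃ h₄ u
    have hS := window_coe hinj h₁ h₂ (Fin.castLE hle (Fin.natAdd t s))
    have hU := window_coe hinj h₁ h₂ (Fin.castLE hle (Fin.natAdd t u))
    simp only [Fin.val_castLE, Fin.val_natAdd, Nat.cast_add] at hS hU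
    rw [show c + 1 + (t + s) = c + t + 1 + s by ring] at hS
    rw [show c + 1 + (t + u) = c + t + 1 + u by ring] at hU
    simp only [Fin.lt_def]
    omega

theorem isPrefixInvariant_window_iff (hinj : Injective σ) {N d : ℕ} (h₁ : IsCut σ c)
    (h₂ : IsCut σ (c + N)) (hd : d ≤ N) :
    IsPrefixInvariant (window σ c N) d ↔ IsCut σ (c + d) := by
  have hw := window_coe hinj h₁ h₂
  constructor
  · intro hpi i
    by_cases hi : c < i ∧ i ≤ c + N
    · obtain ⟨j, rfl⟩ : ∃ j : Fin N, i = c + 1 + j :=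
        ⟨⟨(i - c - 1).toNat, by omega⟩, by simp only; omega⟩
      have := hpi j
      have := hw j
      omega
    · have := h₁ i
      have := h₂ i
      omega
  · intro hd j
    have := hd (c + 1 + j)
    have := hw j
    omega

theorem isPrefixInvariant_iff_isCut_shiftPerm_infiniteSum (hn : 0 < n) (π : Perm (Fin n))
    (r : ℤ) {d : ℕ} (hd : d ≤ n) :
    IsPrefixInvariant π d ↔ IsCut (shiftPerm r (infiniteSum hn π)) (r + d) := by
  conv_lhs => rw [← window_shiftPerm_infiniteSum hn π r]
  exact isPrefixInvariant_window_iff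
    (shiftPerm_bijective (infiniteSum_bijective hn π) r).injective
    (by simpa using isCut_shiftPerm_infiniteSum hn π r 0)
    (by simpa using isCut_shiftPerm_infiniteSum hn π r 1) hd

theorem window_infiniteSum {n : ℕ} (hn : 0 < n) (π : Perm (Fin n)) :
    window (infiniteSum hn π) 0 n = π := by
  simpa [shiftPerm_zero] using window_shiftPerm_infiniteSum hn π 0

end Window

section Decomposition

variable {k n : ℕ}

theorem isSumIndecomposable_iff (α : Perm (Fin k)) :
    IsSumIndecomposable α ↔ ∀ e, 0 < e → e < k → ¬ IsPrefixInvariant α e := by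
  constructor
  · intro hα e he hek hpi
    have hk : 0 < k := he.trans hek
    set σ := infiniteSum hk α
    have hinj := (infiniteSum_bijective hk α).injective
    have h₀ : IsCut σ 0 := isCut_infiniteSum hk α
    have hk' : IsCut σ (0 + k) := by simpa using h₀.add_mul (infiniteSum_add hk α) 1
    have he' : IsCut σ (0 + e) := by
      rwa [← isPrefixInvariant_window_iff hinj h₀ hk' hek.le, window_infiniteSum]
    have hsplit := window_add (b := k - e) hinj h₀ he' (by rwa [add_assoc, ← Nat.cast_add,
      Nat.add_sub_cancel' hek.le])
    refine hα ⟨e, k - e, he, by omega, Nat.add_sub_cancel' hek.le, window σ 0 e,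
      window σ (0 + e) (k - e), ?_⟩
    rw [← hsplit, ← window_eq_permCongr, window_infiniteSum]
  · rintro h ⟨a, b, ha, hb, rfl, β, γ, rfl⟩
    exact h a ha (by omega)
      ((isPrefixInvariant_permCongr_finCongr _ _ _).mpr (isPrefixInvariant_permDirectSum β γ))

def permDirectSumLast (hk : k ≤ n) (β : Perm (Fin (n - k))) (α : Perm (Fin k)) :
    Perm (Fin n) :=
  (finCongr (Nat.sub_add_cancel hk)).permCongr (permDirectSum β α)

theorem isPrefixInvariant_permDirectSumLast (hk : k ≤ n) (β : Perm (Fin (n - k)))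
    (α : Perm (Fin k)) : IsPrefixInvariant (permDirectSumLast hk β α) (n - k) :=
  (isPrefixInvariant_permCongr_finCongr _ _ _).mpr (isPrefixInvariant_permDirectSum β α)

theorem not_isPrefixInvariant_permDirectSumLast (hk : k ≤ n) (β : Perm (Fin (n - k)))
    {α : Perm (Fin k)} (hα : IsSumIndecomposable α) {d : ℕ} (hd₁ : n - k < d) (hd₂ : d < n) :
    ¬ IsPrefixInvariant (permDirectSumLast hk β α) d := fun h =>
  (isSumIndecomposable_iff α).mp hα (d - (n - k)) (by omega) (by omega)
    (((isPrefixInvariant_permCongr_finCongr _ _ _).mp h).of_permDirectSum hd₁.le)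

theorem eq_of_permDirectSumLast_eq {k' : ℕ} {hk : k ≤ n} {hk' : k' ≤ n}
    {β : Perm (Fin (n - k))} {β' : Perm (Fin (n - k'))} {α : Perm (Fin k)} {α' : Perm (Fin k')}
    (hα : IsSumIndecomposable α) (hα' : IsSumIndecomposable α') (hk₀ : 0 < k) (hk₀' : 0 < k')
    (h : permDirectSumLast hk β α = permDirectSumLast hk' β' α') : k = k' := by
  by_contra hne
  rcases Nat.lt_or_gt_of_ne hne with hlt | hlt
  · exact not_isPrefixInvariant_permDirectSumLast hk' β' hα' (by omega) (by omega)
      (h ▸ isPrefixInvariant_permDirectSumLast hk β α)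
  · exact not_isPrefixInvariant_permDirectSumLast hk β hα (by omega) (by omega)
      (h ▸ isPrefixInvariant_permDirectSumLast hk' β' α')

theorem permDirectSumLast_injective {hk : k ≤ n} {β β' : Perm (Fin (n - k))}
    {α α' : Perm (Fin k)} (h : permDirectSumLast hk β α = permDirectSumLast hk β' α') :
    β = β' ∧ α = α' :=
  permDirectSum_injective ((permCongr _).injective h)

theorem exists_eq_permDirectSumLast (hn : 0 < n) (π : Perm (Fin n)) :
    ∃ (k : ℕ) (hk : k ≤ n) (β : Perm (Fin (n - k))) (α : Perm (Fin k)), 0 < k ∧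
      IsSumIndecomposable α ∧ PermContains π β ∧ PermContains π α ∧
      π = permDirectSumLast hk β α := by
  classical
  set σ := infiniteSum hn π
  have hinj := (infiniteSum_bijective hn π).injective
  have h₀ : IsCut σ 0 := isCut_infiniteSum hn π
  have hn' : IsCut σ (0 + n) := by simpa using h₀.add_mul (infiniteSum_add hn π) 1
  have hcut {d : ℕ} (hd : d ≤ n) : IsPrefixInvariant π d ↔ IsCut σ (0 + d) := by
    rw [← isPrefixInvariant_window_iff hinj h₀ hn' hd, window_infiniteSum]
  -- `n - k` is the last cut of `π` before `n`, so that `α` is its last block.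
  set k := n - Nat.findGreatest (IsPrefixInvariant π) (n - 1)
  have hle := Nat.findGreatest_le (P := IsPrefixInvariant π) (n - 1)
  have hk : k ≤ n := Nat.sub_le _ _
  have hnk : n - k = Nat.findGreatest (IsPrefixInvariant π) (n - 1) := by omega
  have hpi : IsPrefixInvariant π (n - k) :=
    hnk ▸ Nat.findGreatest_spec (Nat.zero_le _)
      fun i => iff_of_false (Nat.not_lt_zero _) (Nat.not_lt_zero _)
  have h₁ : IsCut σ (0 + (n - k : ℕ)) := (hcut (by omega)).mp hpi
  have h₂ : IsCut σ (0 + (n - k : ℕ) + k) := by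
    rwa [add_assoc, ← Nat.cast_add, Nat.sub_add_cancel hk]
  refine ⟨k, hk, window σ 0 (n - k), window σ (0 + (n - k : ℕ)) k, by omega, ?_,
    ?_, ?_, ?_⟩
  · refine (isSumIndecomposable_iff _).mpr fun e he hek hpe => ?_
    have hcut' := (isPrefixInvariant_window_iff hinj h₁ h₂ hek.le).mp hpe
    rw [add_assoc, ← Nat.cast_add, ← hcut (by omega)] at hcut'
    exact Nat.findGreatest_is_greatest (n := n - 1) (by omega) (by omega) hcut'
  · simpa [window_infiniteSum] using permContains_window hinj h₀ hn' (t := 0)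
      (by simpa using h₀) (by simpa using h₁) (by omega)
  · simpa [window_infiniteSum] using permContains_window hinj h₀ hn' h₁ h₂ (by omega)
  · rw [permDirectSumLast, ← window_add hinj h₀ h₁ h₂, ← window_eq_permCongr,
      window_infiniteSum]

end Decomposition

section PermClass

variable {C : (n : ℕ) → Set (Perm (Fin n))}

theorem _root_.IsPermClass.mem_zero (hC : IsPermClass C) {m : ℕ} {ρ : Perm (Fin m)} (hρ : ρ ∈ C m)
    (τ : Perm (Fin 0)) : τ ∈ C 0 :=
  hC m 0 ρ τ hρ ⟨Fin.elim0, fun a => a.elim0, fun s => s.elim0⟩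

theorem card_mem_zero (hclass : IsPermClass C) {m : ℕ} {ρ : Perm (Fin m)} (hρ : ρ ∈ C m) :
    Nat.card {τ : Perm (Fin 0) // τ ∈ C 0} = 1 := by
  rw [Nat.card_congr (Equiv.subtypeUnivEquiv (hclass.mem_zero hρ))]
  simp

theorem permCongr_finCongr_mem {a b : ℕ} (h : a = b) {π : Perm (Fin a)} (hπ : π ∈ C a) :
    (finCongr h).permCongr π ∈ C b := by
  subst h
  exact hπ

theorem permDirectSumLast_mem (hsum : IsSumClosed C) {n k : ℕ} (hk : k ≤ n)
    {β : Perm (Fin (n - k))} {α : Perm (Fin k)} (hβ : β ∈ C (n - k)) (hα : α ∈ C k) :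
    permDirectSumLast hk β α ∈ C n :=
  permCongr_finCongr_mem _ (hsum _ _ β α hβ hα)

variable {m : ℕ} (hm : 0 < m) {ρ : Perm (Fin m)}

theorem window_shiftPerm_infiniteSum_mul_mem (hclass : IsPermClass C) (hsum : IsSumClosed C)
    (hρ : ρ ∈ C m) (r : ℤ) (t : ℕ) :
    window (shiftPerm r (infiniteSum hm ρ)) r (m * t) ∈ C (m * t) := by
  induction t with
  | zero => exact hclass.mem_zero hρ _
  | succ t ih =>
    have h₀ : IsCut (shiftPerm r (infiniteSum hm ρ)) r := by
      simpa using isCut_shiftPerm_infiniteSum hm ρ r 0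
    have hcut (q : ℕ) : IsCut (shiftPerm r (infiniteSum hm ρ)) (r + (m * q : ℕ)) := by
      simpa [mul_comm] using isCut_shiftPerm_infiniteSum hm ρ r q
    have hlast : window (shiftPerm r (infiniteSum hm ρ)) (r + (m * t : ℕ)) m = ρ := by
      rw [show r + ((m * t : ℕ) : ℤ) = r + t * m by push_cast; ring,
        ← shiftPerm_add_mul (infiniteSum_add hm ρ) r t, window_shiftPerm_infiniteSum]
    rw [Nat.mul_succ, window_add (shiftPerm_bijective (infiniteSum_bijective hm ρ) r).injective
      h₀ (hcut t) (by simpa [Nat.mul_succ, add_assoc] using hcut (t + 1)), hlast]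
    exact hsum _ _ _ _ ih hρ

theorem window_shiftPerm_infiniteSum_mem (hclass : IsPermClass C) (hsum : IsSumClosed C)
    (hρ : ρ ∈ C m) {r c : ℤ} {n : ℕ} (h₁ : IsCut (shiftPerm r (infiniteSum hm ρ)) c)
    (h₂ : IsCut (shiftPerm r (infiniteSum hm ρ)) (c + n)) :
    window (shiftPerm r (infiniteSum hm ρ)) c n ∈ C n := by
  -- `(c, c + n]` lies inside a window `(r₀, r₀ + m * t]` made of `t` copies of `ρ`.
  obtain ⟨a, ha⟩ : ∃ a : ℕ, |c - r| = a := ⟨_, Int.abs_eq_natAbs _⟩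
  have hm' : (1 : ℤ) ≤ m := by exact_mod_cast hm
  have hr₀ : r + (-a : ℤ) * m ≤ c := by nlinarith [neg_abs_le (c - r)]
  have hcn : c + n ≤ r + (-a : ℤ) * m + (m * (2 * a + n) : ℕ) := by
    push_cast
    nlinarith [le_abs_self (c - r)]
  rw [← shiftPerm_add_mul (infiniteSum_add hm ρ) r (-a)] at h₁ h₂ ⊢
  generalize r + (-a : ℤ) * m = r₀ at *
  generalize 2 * a + n = t at *
  obtain ⟨d, rfl⟩ : ∃ d : ℕ, c = r₀ + d := ⟨(c - r₀).toNat, by omega⟩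
  have h₀ : IsCut (shiftPerm r₀ (infiniteSum hm ρ)) r₀ := by
    simpa using isCut_shiftPerm_infiniteSum hm ρ r₀ 0
  have hbig : IsCut (shiftPerm r₀ (infiniteSum hm ρ)) (r₀ + (m * t : ℕ)) := by
    simpa [mul_comm] using isCut_shiftPerm_infiniteSum hm ρ r₀ t
  exact hclass _ _ _ _ (window_shiftPerm_infiniteSum_mul_mem hm hclass hsum hρ r₀ t)
    (permContains_window (shiftPerm_bijective (infiniteSum_bijective hm ρ) r₀).injective
      h₀ hbig h₁ h₂ (by omega))

end PermClass

section Parametrization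

variable {n : ℕ}

theorem exists_isCut_minimal {σ : ℤ → ℤ} (hn : 0 < n) (hσ : ∀ i, σ (i + n) = σ i + n) {c : ℤ}
    (hc : IsCut σ c) : ∃ r : ℕ, r < n ∧ IsCut σ r ∧ ∀ t : ℕ, t < r → ¬ IsCut σ t := by
  classical
  have hn' : (0 : ℤ) < n := by exact_mod_cast hn
  have hmod : IsCut σ (c % n).toNat := by
    rw [Int.toNat_of_nonneg (Int.emod_nonneg c hn'.ne'), Int.emod_def]
    simpa [sub_eq_add_neg, mul_comm] using hc.add_mul hσ (-(c / n))
  have hex : ∃ r : ℕ, IsCut σ r := ⟨_, hmod⟩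
  refine ⟨Nat.find hex, ?_, Nat.find_spec hex, fun t ht => Nat.find_min hex ht⟩
  have := Nat.find_min' hex hmod
  have := Int.emod_lt_of_pos c hn'
  omega

variable {k : ℕ} {hk : k ≤ n} {β : Perm (Fin (n - k))} {α : Perm (Fin k)}

theorem le_of_isCut_shiftPerm_infiniteSum_permDirectSumLast (hn : 0 < n)
    (hα : IsSumIndecomposable α) {r : ℕ} (hr : r < k) {t : ℕ}
    (ht : IsCut (shiftPerm r (infiniteSum hn (permDirectSumLast hk β α))) t) : r ≤ t := by
  by_contra! htr
  have hσ := shiftPerm_map_add (infiniteSum_add hn (permDirectSumLast hk β α)) r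
  have htn := ht.add_mul hσ 1
  rw [one_mul, show (t : ℤ) + n = r + (t + n - r : ℕ) by omega,
    ← isPrefixInvariant_iff_isCut_shiftPerm_infiniteSum hn _ _ (by omega)] at htn
  exact not_isPrefixInvariant_permDirectSumLast hk β hα (by omega) (by omega) htn

variable (C : (n : ℕ) → Set (Perm (Fin n)))

/-- The data `(k, α, β, r)` of `Σ^r ⊕(β ⊕ α)`: the last block `α` of size `k`, the rest `β`, and
the shift `r < k`. -/
def AffData (n : ℕ) : Type :=
  (k : {k // k ∈ Icc 1 n}) × {α : Perm (Fin k) // α ∈ C k ∧ IsSumIndecomposable α} ×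
    {β : Perm (Fin (n - k)) // β ∈ C (n - k)} × Fin k

def affOfData (hn : 0 < n) : AffData C n → ℤ → ℤ
  | ⟨k, α, β, r⟩ =>
    shiftPerm r (infiniteSum hn (permDirectSumLast (mem_Icc.mp k.2).2 β.1 α.1))

theorem affOfData_injective (hn : 0 < n) : Injective (affOfData C hn) := by
  intro x y h
  obtain ⟨⟨k, hk⟩, ⟨α, _, hα⟩, ⟨β, _⟩, r⟩ := x
  obtain ⟨⟨k', hk'⟩, ⟨α', _, hα'⟩, ⟨β', _⟩, r'⟩ := y
  simp only [affOfData] at h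
  set π := permDirectSumLast (mem_Icc.mp hk).2 β α
  set π' := permDirectSumLast (mem_Icc.mp hk').2 β' α'
  have hr : (r : ℕ) = r' := by
    have hcut : IsCut (shiftPerm r' (infiniteSum hn π')) r := by
      rw [← h]
      simpa using isCut_shiftPerm_infiniteSum hn π r 0
    have hcut' : IsCut (shiftPerm r (infiniteSum hn π)) r' := by
      rw [h]
      simpa using isCut_shiftPerm_infiniteSum hn π' r' 0
    exact le_antisymm (le_of_isCut_shiftPerm_infiniteSum_permDirectSumLast hn hα r.isLt hcut')
      (le_of_isCut_shiftPerm_infiniteSum_permDirectSumLast hn hα' r'.isLt hcut)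
  have hπ : π = π' := by
    rw [← window_shiftPerm_infiniteSum hn π r, h, hr, window_shiftPerm_infiniteSum]
  obtain rfl := eq_of_permDirectSumLast_eq hα hα' (mem_Icc.mp hk).1 (mem_Icc.mp hk').1 hπ
  obtain ⟨rfl, rfl⟩ := permDirectSumLast_injective hπ
  obtain rfl := Fin.ext hr
  rfl

theorem exists_affOfData_eq (hclass : IsPermClass C) (hsum : IsSumClosed C) (hn : 0 < n)
    {σ : ℤ → ℤ} (hA : IsAffinePerm n σ) (hσC : σ ∈ AffOfClass C) :
    ∃ x, affOfData C hn x = σ := by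
  obtain ⟨m, hm, ρ, r, hρ, rfl⟩ := hσC
  obtain ⟨hbij, hσ, -⟩ := hA
  obtain ⟨r₀, hr₀n, hr₀, hr₀min⟩ :=
    exists_isCut_minimal hn hσ (by simpa using isCut_shiftPerm_infiniteSum hm ρ r 0)
  have hr₀' : IsCut (shiftPerm r (infiniteSum hm ρ)) (r₀ + n) := by
    simpa using hr₀.add_mul hσ 1
  set π := window (shiftPerm r (infiniteSum hm ρ)) r₀ n
  have hπC : π ∈ C n := window_shiftPerm_infiniteSum_mem hm hclass hsum hρ hr₀ hr₀'
  have hσπ := eq_shiftPerm_infiniteSum_window hn hbij.injective hσ hr₀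
  obtain ⟨k, hk, β, α, hk₀, hα, hβπ, hαπ, hπ⟩ := exists_eq_permDirectSumLast hn π
  -- The cut at `r₀ + (n - k) - n` would precede `r₀` if the shift `r₀` were not below `k`.
  have hr₀k : r₀ < k := by
    by_contra! hkr
    have hcut := (isPrefixInvariant_iff_isCut_shiftPerm_infiniteSum hn π r₀ (Nat.sub_le n k)).mp
      (hπ ▸ isPrefixInvariant_permDirectSumLast hk β α)
    rw [← hσπ] at hcut
    refine hr₀min (r₀ - k) (by omega) ?_
    convert hcut.add_mul hσ (-1) using 1
    push_cast [Nat.cast_sub hkr, Nat.cast_sub hk]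
    ring
  refine ⟨⟨⟨k, mem_Icc.mpr ⟨hk₀, hk⟩⟩, ⟨α, hclass _ _ _ _ hπC hαπ, hα⟩,
    ⟨β, hclass _ _ _ _ hπC hβπ⟩, ⟨r₀, hr₀k⟩⟩, ?_⟩
  simp only [affOfData]
  rw [← hπ]
  exact hσπ.symm

theorem affOfData_mem (hsum : IsSumClosed C) (hn : 0 < n) (x : AffData C n) :
    IsAffinePerm n (affOfData C hn x) ∧ affOfData C hn x ∈ AffOfClass C := by
  obtain ⟨⟨k, hk⟩, ⟨α, hαC, -⟩, ⟨β, hβC⟩, r⟩ := x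
  exact ⟨isAffinePerm_shiftPerm_infiniteSum hn _ r,
    n, hn, _, r, permDirectSumLast_mem hsum _ hβC hαC, rfl⟩

theorem card_affOfClass (hclass : IsPermClass C) (hsum : IsSumClosed C) (hn : 0 < n) :
    Nat.card {σ : ℤ → ℤ // IsAffinePerm n σ ∧ σ ∈ AffOfClass C} = Nat.card (AffData C n) := by
  refine (Nat.card_congr (Equiv.ofBijective
    (fun x => ⟨affOfData C hn x, affOfData_mem C hsum hn x⟩)
    ⟨fun x y h => affOfData_injective C hn (congrArg Subtype.val h), ?_⟩)).symm
  rintro ⟨σ, hA, hσC⟩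
  obtain ⟨x, rfl⟩ := exists_affOfData_eq C hclass hsum hn hA hσC
  exact ⟨x, rfl⟩

theorem card_affData : Nat.card (AffData C n) = ∑ k ∈ Icc 1 n, k *
    Nat.card {α : Perm (Fin k) // α ∈ C k ∧ IsSumIndecomposable α} *
      Nat.card {β : Perm (Fin (n - k)) // β ∈ C (n - k)} := by
  rw [AffData, Nat.card_sigma, ← sum_coe_sort (Icc 1 n)]
  refine sum_congr rfl fun k _ => ?_
  simp only [Nat.card_prod, Nat.card_eq_fintype_card, Fintype.card_fin]
  ring

end Parametrization

end AffinePerm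

/-- `˜fₙ = ∑_{k=1}^n k·g_k·f_{n−k}` for a sum closed class `C`. -/
theorem stmt2 (C : (n : ℕ) → Set (Equiv.Perm (Fin n)))
    (hclass : IsPermClass C) (hsum : IsSumClosed C)
    (f g : ℕ → ℕ) (hf0 : f 0 = 1)
    (hf : ∀ j : ℕ, 1 ≤ j → f j = (C j).ncard)
    (hg : ∀ j : ℕ, 1 ≤ j →
      g j = Set.ncard {π : Equiv.Perm (Fin j) | π ∈ C j ∧ IsSumIndecomposable π})
    (n : ℕ) (hn : 1 ≤ n) :
    Nat.card {σ : ℤ → ℤ // IsAffinePerm n σ ∧ σ ∈ AffOfClass C} =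
      ∑ k ∈ Finset.Icc 1 n, k * g k * f (n - k) := by
  rw [AffinePerm.card_affOfClass C hclass hsum hn, AffinePerm.card_affData]
  refine Finset.sum_congr rfl fun k hk => ?_
  obtain ⟨hk₁, -⟩ := Finset.mem_Icc.mp hk
  have hgk : Nat.card {α : Equiv.Perm (Fin k) // α ∈ C k ∧ IsSumIndecomposable α} = g k := by
    rw [hg k hk₁]
    exact Nat.card_coe_set_eq _
  rw [hgk]
  rcases Nat.eq_zero_or_pos (g k) with hg₀ | hg₀
  · simp [hg₀]
  rcases Nat.eq_zero_or_pos (n - k) with hnk | hnk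
  · obtain ⟨α, hαC, -⟩ := Set.nonempty_of_ncard_ne_zero (hg k hk₁ ▸ hg₀.ne')
    rw [hnk, hf0, AffinePerm.card_mem_zero hclass hαC]
  · rw [hf _ hnk, Nat.card_coe_set_eq]
end

section
/- For every n ≥ 1, ∑_{π ∈ S_n} a(π) equals the number of sum-indecomposable permutations of size n+1, where the sum is over all permutations π of size n. -/
/-!
Delete the largest entry `n + 1` from the one-line notation of `σ ∈ S_{n+1}`; if it stood at
(0-indexed) position `k`, this leaves `π ∈ S_n`, and `σ ↦ (π, k)` is a bijection
`S_{n+1} ≃ S_n × Fin (n + 1)`. A proper prefix `{1, …, d}` fixed setwise by `σ` cannot contain the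
position of `n + 1`, so `d ≤ k`, and for such `d` it is fixed by `σ` iff it is fixed by `π`. Hence
`σ` is sum-indecomposable iff `π` fixes no prefix of length `d ∈ [1, k]`, i.e. iff `k < a(π)`, and
each `π` arises from exactly `a(π)` indecomposable `σ`.
-/

open Equiv Finset

theorem isPrefixInvariant_permDirectSum {a b : ℕ} (σ : Perm (Fin a)) (ρ : Perm (Fin b)) :
    IsPrefixInvariant (permDirectSum σ ρ) a := by
  intro j
  induction j using Fin.addCases with
  | left i => simp [permDirectSum]
  | right i => simp [permDirectSum]

theorem exists_eq_permDirectSum_of_isPrefixInvariant {a b : ℕ} {p : Perm (Fin (a + b))}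
    (hp : IsPrefixInvariant p a) : ∃ σ ρ, p = permDirectSum σ ρ := by
  have hmaps : Set.MapsTo (finSumFinEquiv.permCongr.symm p) (Set.range Sum.inl)
      (Set.range Sum.inl) := by
    rintro _ ⟨i, rfl⟩
    have hlt : (p (Fin.castAdd b i) : ℕ) < a := (hp _).2 i.isLt
    refine ⟨(p (Fin.castAdd b i)).castLT hlt, ?_⟩
    simp [← finSumFinEquiv_symm_apply_castAdd]
  obtain ⟨⟨σ, ρ⟩, hστ⟩ := Perm.mem_sumCongrHom_range_of_perm_mapsTo_inl hmaps
  refine ⟨σ, ρ, ?_⟩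
  rw [← finSumFinEquiv.permCongr.apply_symm_apply p, ← hστ]
  rfl

theorem isSumIndecomposable_iff {m : ℕ} (π : Perm (Fin m)) :
    IsSumIndecomposable π ↔ ∀ d, 0 < d → d < m → ¬ IsPrefixInvariant π d := by
  simp only [IsSumIndecomposable, not_exists]
  constructor
  · intro h d hd hdm hπ
    obtain ⟨b, rfl⟩ := Nat.exists_eq_add_of_lt hdm
    obtain ⟨σ, ρ, rfl⟩ := exists_eq_permDirectSum_of_isPrefixInvariant (b := b + 1) hπ
    exact h d (b + 1) hd b.succ_pos rfl σ ρ rfl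
  · rintro h a b ha hb rfl σ ρ rfl
    exact h a ha (by omega) (isPrefixInvariant_permDirectSum σ ρ)

theorem isPrefixInvariant_self {n : ℕ} (π : Perm (Fin n)) : IsPrefixInvariant π n :=
  fun i => iff_of_true (π i).isLt i.isLt

theorem firstBlockSize_le_self {n : ℕ} (hn : 1 ≤ n) (π : Perm (Fin n)) : firstBlockSize π ≤ n :=
  Nat.sInf_le ⟨hn, le_rfl, isPrefixInvariant_self π⟩

theorem lt_firstBlockSize_iff {n : ℕ} (hn : 1 ≤ n) (π : Perm (Fin n)) {k : ℕ} (hk : k ≤ n) :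
    k < firstBlockSize π ↔ ∀ d, 0 < d → d ≤ k → ¬ IsPrefixInvariant π d := by
  constructor
  · intro hlt d hd hdk hπ
    have : firstBlockSize π ≤ d := Nat.sInf_le ⟨hd, hdk.trans hk, hπ⟩
    omega
  · intro h
    by_contra! hle
    have hne : {d | 1 ≤ d ∧ d ≤ n ∧ IsPrefixInvariant π d}.Nonempty :=
      ⟨n, hn, le_rfl, isPrefixInvariant_self π⟩
    obtain ⟨hpos, -, hπ⟩ := Nat.sInf_mem hne
    exact h _ hpos hle hπ

theorem Fin.val_succAbove_lt_iff {n : ℕ} {k : Fin (n + 1)} {d : ℕ} (hd : d ≤ k) (j : Fin n) :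
    (k.succAbove j : ℕ) < d ↔ (j : ℕ) < d := by
  rcases lt_or_ge j.castSucc k with h | h
  · rw [Fin.succAbove_of_castSucc_lt _ _ h, Fin.val_castSucc]
  · rw [Fin.succAbove_of_le_castSucc _ _ h, Fin.val_succ]
    rw [Fin.le_def, Fin.val_castSucc] at h
    omega

section InsertMax

variable {n : ℕ}

/-- The permutation whose one-line notation is that of `π` with the new maximum `Fin.last n`
inserted at position `k`. -/
def insertMax (π : Perm (Fin n)) (k : Fin (n + 1)) : Perm (Fin (n + 1)) :=
  (finSuccEquiv' k).trans (π.optionCongr.trans (finSuccEquiv' (Fin.last n)).symm)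

@[simp]
theorem insertMax_apply_self (π : Perm (Fin n)) (k : Fin (n + 1)) :
    insertMax π k k = Fin.last n := by
  simp [insertMax]

@[simp]
theorem insertMax_apply_succAbove (π : Perm (Fin n)) (k : Fin (n + 1)) (j : Fin n) :
    insertMax π k (k.succAbove j) = (π j).castSucc := by
  simp [insertMax]

theorem insertMax_injective : Function.Injective (Function.uncurry (insertMax (n := n))) := by
  rintro ⟨π, k⟩ ⟨π', k'⟩ h
  simp only [Function.uncurry_apply_pair] at h
  have hk : k = k' := (insertMax π' k').injective <| by
    rw [← h, insertMax_apply_self, h, insertMax_apply_self]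
  subst hk
  refine Prod.ext (Equiv.ext fun j => Fin.castSucc_injective _ ?_) rfl
  rw [← insertMax_apply_succAbove, ← insertMax_apply_succAbove, h]

theorem insertMax_bijective : Function.Bijective (Function.uncurry (insertMax (n := n))) := by
  rw [Fintype.bijective_iff_injective_and_card]
  refine ⟨insertMax_injective, ?_⟩
  simp [Fintype.card_perm, Nat.factorial_succ, mul_comm]

theorem le_of_isPrefixInvariant_insertMax {π : Perm (Fin n)} {k : Fin (n + 1)} {d : ℕ}
    (hd : d ≤ n) (h : IsPrefixInvariant (insertMax π k) d) : d ≤ k := by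
  have := h k
  simp only [insertMax_apply_self, Fin.val_last] at this
  omega

theorem isPrefixInvariant_insertMax_iff {π : Perm (Fin n)} {k : Fin (n + 1)} {d : ℕ}
    (hd : d ≤ k) : IsPrefixInvariant (insertMax π k) d ↔ IsPrefixInvariant π d := by
  have hk : d ≤ n := hd.trans (Nat.lt_succ_iff.mp k.isLt)
  simp only [IsPrefixInvariant, Fin.forall_iff_succAbove k, insertMax_apply_self,
    insertMax_apply_succAbove, Fin.val_last, Fin.val_castSucc, Fin.val_succAbove_lt_iff hd]
  exact ⟨fun h => h.2, fun h => ⟨by omega, h⟩⟩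

theorem isSumIndecomposable_insertMax_iff (hn : 1 ≤ n) (π : Perm (Fin n)) (k : Fin (n + 1)) :
    IsSumIndecomposable (insertMax π k) ↔ (k : ℕ) < firstBlockSize π := by
  rw [isSumIndecomposable_iff, lt_firstBlockSize_iff hn π (Nat.lt_succ_iff.mp k.isLt)]
  constructor
  · intro h d hd hdk hπ
    exact h d hd (by omega) ((isPrefixInvariant_insertMax_iff hdk).2 hπ)
  · intro h d hd hdn hσ
    have hdk := le_of_isPrefixInvariant_insertMax (Nat.lt_succ_iff.mp hdn) hσ
    exact h d hd hdk ((isPrefixInvariant_insertMax_iff hdk).1 hσ)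

end InsertMax

/-- `∑_{π ∈ Sₙ} a(π)` equals the number of sum-indecomposable
permutations of size `n+1`. -/
theorem stmt5 (n : ℕ) (hn : 1 ≤ n) :
    ∑ π : Equiv.Perm (Fin n), firstBlockSize π =
      Nat.card {π : Equiv.Perm (Fin (n + 1)) // IsSumIndecomposable π} := by
  classical
  calc ∑ π : Perm (Fin n), firstBlockSize π
      = Fintype.card {p : Perm (Fin n) × Fin (n + 1) // (p.2 : ℕ) < firstBlockSize p.1} := by
        rw [Fintype.card_subtype, card_filter, Fintype.sum_prod_type]
        refine sum_congr rfl fun π _ => ?_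
        rw [← card_filter, eq_comm]
        exact Fin.card_filter_val_lt.trans
          (min_eq_right (Nat.le_succ_of_le (firstBlockSize_le_self hn π)))
    _ = Nat.card {σ : Perm (Fin (n + 1)) // IsSumIndecomposable σ} := by
        rw [← Nat.card_eq_fintype_card]
        exact Nat.card_congr <| (Equiv.ofBijective _ insertMax_bijective).subtypeEquiv
          fun p => (isSumIndecomposable_insertMax_iff hn p.1 p.2).symm
end

section
/- An affine permutation is decomposable if and only if it avoids the infinite increasing oscillation 𝒪. -/
/-!
A decomposable affine permutation has a cut `c`: it maps `(-∞, c]` onto itself. A copy of a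
pattern inside it is then increasing across some position, whereas `𝒪` has an inversion across
every position. Conversely, a cut of an injective `n`-periodic map splits it into blocks of
length `n`, making it a shift of an infinite sum.

If there is no cut, the balance condition `∑ (ω i - i) = 0` forces crossings in both directions
at every `c`: some `i ≤ c` with `ω i > c` and some `j > c` with `ω j ≤ c`. (Over a window of
whole periods ending at `c`, the values would otherwise be distinct integers `≤ c` with the same
sum as the window itself, leaving no room below `c` for a further value.) Iterating
`s ↦ (last position whose value is below every value before s)`, periodicity and pigeonhole give
a bi-infinite sequence `s k`; with `p k` the position of the largest value before `s (k + 1)`,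
the positions `s k < p k < s (k + 1)` carry a copy of `𝒪`.
-/

open Finset

namespace AffinePermutation

variable {ω : ℤ → ℤ} {N : ℤ}

def IsCut (ω : ℤ → ℤ) (c : ℤ) : Prop := ∀ i, ω i ≤ c ↔ i ≤ c

section Cut

lemma oscillO_two_mul (k : ℤ) : oscillO (2 * k) = 2 * (k - 1) := by
  rw [oscillO, if_neg (by simp [parity_simps])]; ring

lemma oscillO_two_mul_add_one (k : ℤ) : oscillO (2 * k + 1) = 2 * (k + 1) + 1 := by
  rw [oscillO, if_pos (odd_two_mul_add_one k)]; ring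

lemma exists_inversion_across_oscillO (k : ℤ) :
    ∃ i j, i ≤ k ∧ k < j ∧ oscillO j < oscillO i := by
  obtain ⟨m, rfl | rfl⟩ := Int.even_or_odd' k
  · refine ⟨2 * (m - 1) + 1, 2 * (m + 1), by omega, by omega, ?_⟩
    rw [oscillO_two_mul, oscillO_two_mul_add_one]; omega
  · refine ⟨2 * m + 1, 2 * (m + 1), le_rfl, by omega, ?_⟩
    rw [oscillO_two_mul, oscillO_two_mul_add_one]; omega

lemma _root_.StrictMono.apply_add_sub_le {φ : ℤ → ℤ} (hφ : StrictMono φ) {i j : ℤ}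
    (hij : i ≤ j) : φ i + (j - i) ≤ φ j := by
  induction j, hij using Int.leInduction with
  | base => simp
  | succ j _ ih => have := hφ (lt_add_one j); omega

lemma _root_.StrictMono.exists_apply_le_lt_apply_add_one {φ : ℤ → ℤ} (hφ : StrictMono φ)
    (c : ℤ) : ∃ k, φ k ≤ c ∧ c < φ (k + 1) := by
  have hbdd : ∀ k, φ k ≤ c → k ≤ |c - φ 0| := fun k hk => by
    rcases le_or_gt 0 k with h | h
    · have := hφ.apply_add_sub_le h; have := le_abs_self (c - φ 0); omega
    · have := abs_nonneg (c - φ 0); omega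
  obtain ⟨k, hk, hmax⟩ := Int.exists_greatest_of_bdd ⟨_, hbdd⟩
    ⟨-|c - φ 0|, by
      have := hφ.apply_add_sub_le (neg_nonpos.mpr (abs_nonneg (c - φ 0)))
      have := neg_abs_le (c - φ 0); omega⟩
  exact ⟨k, hk, not_le.mp fun h => by have := hmax _ h; omega⟩

lemma _root_.ContainsAffine.exists_lt_across_of_isCut {ω' : ℤ → ℤ} (h : ContainsAffine ω ω')
    {c : ℤ} (hc : IsCut ω c) : ∃ k, ∀ i j, i ≤ k → k < j → ω' i < ω' j := by
  obtain ⟨φ, φ', hφ, hφ', heq⟩ := h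
  obtain ⟨k, hk, hk1⟩ := hφ.exists_apply_le_lt_apply_add_one c
  refine ⟨k, fun i j hi hj => hφ'.lt_iff_lt.mp ?_⟩
  rw [← heq, ← heq]
  have hi' : ω (φ i) ≤ c := (hc _).mpr ((hφ.monotone hi).trans hk)
  have hj' : ¬ ω (φ j) ≤ c := fun h => by
    have := (hc _).mp h; have := hφ.monotone (show k + 1 ≤ j by omega); omega
  omega

lemma not_containsAffine_oscillO_of_isCut {c : ℤ} (hc : IsCut ω c) :
    ¬ ContainsAffine ω oscillO := fun h => by
  obtain ⟨k, hk⟩ := h.exists_lt_across_of_isCut hc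
  obtain ⟨i, j, hi, hj, hinv⟩ := exists_inversion_across_oscillO k
  exact (hk i j hi hj).not_gt hinv

end Cut

section Periodic

lemma periodic_apply_sub_self (hper : ∀ i, ω (i + N) = ω i + N) :
    Function.Periodic (fun i => ω i - i) N := fun i => by simp only [hper]; ring

lemma apply_add_mul_of_apply_add (hper : ∀ i, ω (i + N) = ω i + N) (k i : ℤ) :
    ω (i + k * N) = ω i + k * N := by
  have := (periodic_apply_sub_self hper).int_mul k i
  simp only [Int.cast_id] at this
  linarith

lemma exists_abs_sub_le (hN : 0 < N) (hper : ∀ i, ω (i + N) = ω i + N) :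
    ∃ B : ℕ, ∀ i, |ω i - i| ≤ B := by
  have hfin : (Set.range (abs ∘ fun i => ω i - i)).Finite :=
    ((periodic_apply_sub_self hper).comp abs).image_Ioc hN 0 ▸ (Set.finite_Ioc _ _).image _
  obtain ⟨B, hB⟩ := hfin.bddAbove
  exact ⟨B.toNat, fun i => (hB ⟨i, rfl⟩).trans (Int.self_le_toNat B)⟩

end Periodic

section Decomposable

lemma infiniteSum_le_zero_iff {m : ℕ} (hm : 0 < m) (π : Equiv.Perm (Fin m)) (i : ℤ) :
    infiniteSum hm π i ≤ 0 ↔ i ≤ 0 := by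
  have hm' : (0 : ℤ) < m := by exact_mod_cast hm
  have := Int.emod_add_mul_ediv (i - 1) m
  have := Int.emod_nonneg (i - 1) hm'.ne'
  have := Int.emod_lt_of_pos (i - 1) hm'
  unfold infiniteSum
  generalize π _ = x
  have := x.isLt
  rcases le_or_gt 0 ((i - 1) / m) with hq | hq
  · have := mul_nonneg hm'.le hq
    omega
  · have := mul_le_mul_of_nonneg_left (show (i - 1) / m ≤ -1 by omega) hm'.le
    omega

lemma _root_.IsDecomposableAffine.exists_isCut (h : IsDecomposableAffine ω) :
    ∃ c, IsCut ω c := by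
  obtain ⟨r, m, hm, π, rfl⟩ := h
  refine ⟨r, fun i => ?_⟩
  have := infiniteSum_le_zero_iff hm π (i - r)
  simp only [shiftPerm]
  omega

lemma isDecomposableAffine_of_isCut {n : ℕ} (hn : 0 < n) (hinj : Function.Injective ω)
    (hper : ∀ i, ω (i + n) = ω i + n) {c : ℤ} (hc : IsCut ω c) : IsDecomposableAffine ω := by
  have hn' : (0 : ℤ) < n := by exact_mod_cast hn
  have hblock : ∀ a : Fin n, 0 ≤ ω (c + a + 1) - (c + 1) ∧ ω (c + a + 1) - (c + 1) < n := by
    intro a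
    have h1 := (hc (c + a + 1)).not
    have h2 := hc (c + a + 1 - n)
    have := hper (c + a + 1 - n)
    rw [sub_add_cancel] at this
    have := a.isLt
    simp only [not_le] at h1
    constructor <;> omega
  let π : Fin n → Fin n := fun a => ⟨(ω (c + a + 1) - (c + 1)).toNat, by have := hblock a; omega⟩
  have hπ : ∀ a, ((π a : ℕ) : ℤ) = ω (c + a + 1) - (c + 1) := fun a =>
    Int.toNat_of_nonneg (hblock a).1
  have hπinj : Function.Injective π := fun a b hab => by
    have := congrArg (fun x : Fin n => ((x : ℕ) : ℤ)) hab
    simp only [hπ] at this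
    have := hinj (show ω (c + a + 1) = ω (c + b + 1) by omega)
    exact Fin.ext (by omega)
  refine ⟨c, n, hn, Equiv.ofBijective π hπinj.bijective_of_finite, funext fun j => ?_⟩
  simp only [shiftPerm, infiniteSum, Equiv.ofBijective_apply, hπ]
  rw [Int.toNat_of_nonneg (Int.emod_nonneg (j - c - 1) hn'.ne')]
  have := Int.emod_add_mul_ediv (j - c - 1) n
  have := apply_add_mul_of_apply_add hper ((j - c - 1) / n) (c + (j - c - 1) % n + 1)
  rw [show c + (j - c - 1) % n + 1 + (j - c - 1) / n * n = j by linarith] at this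
  linarith

end Decomposable

section Crossings

lemma _root_.Function.Periodic.sum_Ioc_add {M : Type*} [AddCancelCommMonoid M] {d : ℤ → M}
    (h : Function.Periodic d N) (hN : 0 ≤ N) (a : ℤ) :
    ∑ i ∈ Ioc a (a + N), d i = ∑ i ∈ Ioc 0 N, d i := by
  have hstep : ∀ a : ℤ, ∑ i ∈ Ioc (a + 1) (a + 1 + N), d i = ∑ i ∈ Ioc a (a + N), d i := by
    intro a
    have h1 := insert_Ioc_add_one_left_eq_Ioc (show a < a + 1 + N by omega)
    have h2 := insert_Ioc_right_eq_Ioc_add_one (show a ≤ a + N by omega)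
    rw [show a + N + 1 = a + 1 + N by ring] at h2
    have e1 := congrArg (∑ i ∈ ·, d i) h1
    have e2 := congrArg (∑ i ∈ ·, d i) h2
    rw [sum_insert (by simp), ← e2, sum_insert (by simp), h (a + 1)] at e1
    exact add_left_cancel e1
  induction a using Int.induction_on with
  | zero => simp
  | succ a ih => rw [hstep, ih]
  | pred a ih => rw [← ih, ← hstep, sub_add_cancel]

lemma _root_.Function.Periodic.sum_Ioc_add_mul {M : Type*} [AddCancelCommMonoid M]
    {d : ℤ → M} (h : Function.Periodic d N) (hN : 0 ≤ N) (a : ℤ) (t : ℕ) :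
    ∑ i ∈ Ioc a (a + t * N), d i = t • ∑ i ∈ Ioc 0 N, d i := by
  induction t with
  | zero => simp
  | succ t ih =>
    have hle : a ≤ a + t * N := le_add_of_nonneg_right (mul_nonneg (by positivity) hN)
    rw [← Ioc_union_Ioc_eq_Ioc hle (show a + t * N ≤ a + (t + 1 : ℕ) * N by push_cast; linarith),
      sum_union (Ioc_disjoint_Ioc_of_le le_rfl), ih, succ_nsmul,
      show a + ((t + 1 : ℕ) : ℤ) * N = a + t * N + N by push_cast; ring, h.sum_Ioc_add hN]

lemma sum_le_sum_Ioc_of_forall_le (s : Finset ℤ) {c : ℤ} (h : ∀ x ∈ s, x ≤ c) :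
    ∑ x ∈ s, x ≤ ∑ x ∈ Ioc (c - #s) c, x := by
  induction s using Finset.induction_on_max generalizing c with
  | empty => simp
  | insert a s hlt ih =>
    have ha := h a (mem_insert_self a s)
    have hs := ih (c := c - 1) fun x hx => by have := hlt x hx; omega
    have hIoc := insert_Ioc_right_eq_Ioc_add_one (show c - 1 - #s ≤ c - 1 by omega)
    rw [sub_add_cancel] at hIoc
    rw [sum_insert fun hmem => (hlt a hmem).false, card_insert_of_notMem fun hmem =>
      (hlt a hmem).false, show c - ((#s + 1 : ℕ) : ℤ) = c - 1 - #s by push_cast; ring, ← hIoc,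
      sum_insert (by simp)]
    exact add_le_add ha hs

lemma sum_Ioc_le_sum_of_forall_lt (s : Finset ℤ) {c : ℤ} (h : ∀ x ∈ s, c < x) :
    ∑ x ∈ Ioc c (c + #s), x ≤ ∑ x ∈ s, x := by
  induction s using Finset.induction_on_min generalizing c with
  | empty => simp
  | insert a s hlt ih =>
    have ha := h a (mem_insert_self a s)
    have hs := ih (c := c + 1) fun x hx => by have := hlt x hx; omega
    have hIoc := insert_Ioc_add_one_left_eq_Ioc (show c < c + 1 + #s by omega)
    rw [sum_insert fun hmem => (hlt a hmem).false, card_insert_of_notMem fun hmem =>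
      (hlt a hmem).false, show c + ((#s + 1 : ℕ) : ℤ) = c + 1 + #s by push_cast; ring, ← hIoc,
      sum_insert (by simp)]
    exact add_le_add (by omega) hs

lemma sum_Ioc_add_mul_apply_eq (hN : 0 ≤ N) (hper : ∀ i, ω (i + N) = ω i + N)
    (hbal : ∑ i ∈ Ioc 0 N, (ω i - i) = 0) (a : ℤ) (t : ℕ) :
    ∑ i ∈ Ioc a (a + t * N), ω i = ∑ i ∈ Ioc a (a + t * N), i := by
  rw [← sub_eq_zero, ← sum_sub_distrib, (periodic_apply_sub_self hper).sum_Ioc_add_mul hN, hbal,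
    smul_zero]

lemma exists_lt_apply_of_exists_apply_le (hN : 0 < N) (hinj : Function.Injective ω)
    (hper : ∀ i, ω (i + N) = ω i + N) (hbal : ∑ i ∈ Ioc 0 N, (ω i - i) = 0) {B : ℕ}
    (hB : ∀ i, |ω i - i| ≤ B) {c : ℤ} (hj : ∃ j, c < j ∧ ω j ≤ c) :
    ∃ i, i ≤ c ∧ c < ω i := by
  obtain ⟨j, hcj, hjc⟩ := hj
  by_contra! hno
  have hKB : (B : ℤ) ≤ B * N := le_mul_of_one_le_right (Nat.cast_nonneg B) hN
  set W := Ioc (c - B * N) c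
  have hWsum := sum_Ioc_add_mul_apply_eq hN.le hper hbal (c - B * N) B
  rw [sub_add_cancel] at hWsum
  have hjW : j ∉ W := by simp only [W, mem_Ioc]; omega
  have key := sum_le_sum_Ioc_of_forall_le ((insert j W).image ω) (c := c) (by
    simp only [mem_image, mem_insert, forall_exists_index, and_imp]
    rintro _ i (rfl | hi) rfl
    exacts [hjc, hno i (mem_Ioc.mp hi).2])
  have hIoc := insert_Ioc_add_one_left_eq_Ioc (show c - B * N - 1 < c by omega)
  rw [sub_add_cancel] at hIoc
  rw [card_image_of_injective _ hinj, card_insert_of_notMem hjW, Int.card_Ioc,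
    sum_image hinj.injOn, sum_insert hjW, hWsum,
    show c - (((c - (c - B * N)).toNat + 1 : ℕ) : ℤ) = c - B * N - 1 by push_cast; omega,
    ← hIoc, sum_insert (by simp)] at key
  have := abs_le.mp (hB j)
  omega

lemma exists_apply_le_of_exists_lt_apply (hN : 0 < N) (hinj : Function.Injective ω)
    (hper : ∀ i, ω (i + N) = ω i + N) (hbal : ∑ i ∈ Ioc 0 N, (ω i - i) = 0) {B : ℕ}
    (hB : ∀ i, |ω i - i| ≤ B) {c : ℤ} (hi : ∃ i, i ≤ c ∧ c < ω i) :
    ∃ j, c < j ∧ ω j ≤ c := by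
  obtain ⟨i, hic, hci⟩ := hi
  by_contra! hno
  have hKB : (B : ℤ) ≤ B * N := le_mul_of_one_le_right (Nat.cast_nonneg B) hN
  set W := Ioc c (c + B * N)
  have hWsum := sum_Ioc_add_mul_apply_eq hN.le hper hbal c B
  have hiW : i ∉ W := by simp only [W, mem_Ioc]; omega
  have key := sum_Ioc_le_sum_of_forall_lt ((insert i W).image ω) (c := c) (by
    simp only [mem_image, mem_insert, forall_exists_index, and_imp]
    rintro _ j (rfl | hj) rfl
    exacts [hci, hno j (mem_Ioc.mp hj).1])
  have hIoc := insert_Ioc_right_eq_Ioc_add_one (show c ≤ c + B * N by omega)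
  rw [card_image_of_injective _ hinj, card_insert_of_notMem hiW, Int.card_Ioc,
    sum_image hinj.injOn, sum_insert hiW, hWsum,
    show c + (((c + B * N - c).toNat + 1 : ℕ) : ℤ) = c + B * N + 1 by push_cast; omega,
    ← hIoc, sum_insert (by simp)] at key
  have := abs_le.mp (hB i)
  omega

lemma exists_crossings_of_not_isCut (hN : 0 < N) (hinj : Function.Injective ω)
    (hper : ∀ i, ω (i + N) = ω i + N) (hbal : ∑ i ∈ Ioc 0 N, (ω i - i) = 0) {B : ℕ}
    (hB : ∀ i, |ω i - i| ≤ B) {c : ℤ} (hc : ¬ IsCut ω c) :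
    (∃ i, i ≤ c ∧ c < ω i) ∧ ∃ j, c < j ∧ ω j ≤ c := by
  simp only [IsCut, not_forall] at hc
  obtain ⟨i, hi⟩ := hc
  by_cases hic : i ≤ c
  · have hup : ∃ i, i ≤ c ∧ c < ω i := ⟨i, hic, not_le.mp fun h => hi (iff_of_true h hic)⟩
    exact ⟨hup, exists_apply_le_of_exists_lt_apply hN hinj hper hbal hB hup⟩
  · have hdown : ∃ j, c < j ∧ ω j ≤ c :=
      ⟨i, not_le.mp hic, not_not.mp fun h => hi (iff_of_false h hic)⟩
    exact ⟨exists_lt_apply_of_exists_apply_le hN hinj hper hbal hB hdown, hdown⟩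

end Crossings

-- Both are junk values (`sSup` of an unbounded or empty set) unless `ω` has bounded displacement.
noncomputable def prefixMax (ω : ℤ → ℤ) (c : ℤ) : ℤ := sSup (ω '' Set.Iic c)

noncomputable def lastBelow (ω : ℤ → ℤ) (v : ℤ) : ℤ := sSup {z | ω z < v}

section Records

variable {B : ℤ}

lemma bddAbove_image_Iic (hB : ∀ i, |ω i - i| ≤ B) (c : ℤ) : BddAbove (ω '' Set.Iic c) :=
  ⟨c + B, by
    rintro _ ⟨i, hi, rfl⟩
    have := (abs_le.mp (hB i)).2
    simp only [Set.mem_Iic] at hi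
    omega⟩

lemma exists_apply_eq_prefixMax (hB : ∀ i, |ω i - i| ≤ B) (c : ℤ) :
    ∃ i ≤ c, ω i = prefixMax ω c :=
  Int.csSup_mem (Set.image_nonempty.mpr Set.nonempty_Iic) (bddAbove_image_Iic hB c)

lemma apply_le_prefixMax (hB : ∀ i, |ω i - i| ≤ B) {i c : ℤ} (hi : i ≤ c) :
    ω i ≤ prefixMax ω c :=
  le_csSup (bddAbove_image_Iic hB c) ⟨i, hi, rfl⟩

lemma lt_prefixMax (hB : ∀ i, |ω i - i| ≤ B) (hup : ∀ c, ∃ i, i ≤ c ∧ c < ω i) (c : ℤ) :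
    c < prefixMax ω c := by
  obtain ⟨i, hi, hci⟩ := hup c
  exact hci.trans_le (apply_le_prefixMax hB hi)

lemma prefixMax_add (hB : ∀ i, |ω i - i| ≤ B) (hper : ∀ i, ω (i + N) = ω i + N) (c : ℤ) :
    prefixMax ω (c + N) = prefixMax ω c + N := by
  obtain ⟨i, hi, hieq⟩ := exists_apply_eq_prefixMax hB (c + N)
  obtain ⟨i', hi', hi'eq⟩ := exists_apply_eq_prefixMax hB c
  have h1 := apply_le_prefixMax hB (show i - N ≤ c by omega)
  have h2 := apply_le_prefixMax hB (show i' + N ≤ c + N by omega)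
  rw [hper] at h2
  have := hper (i - N)
  rw [sub_add_cancel] at this
  omega

lemma bddAbove_setOf_apply_lt (hB : ∀ i, |ω i - i| ≤ B) (v : ℤ) : BddAbove {z | ω z < v} :=
  ⟨v + B, fun z (hz : ω z < v) => by have := (abs_le.mp (hB z)).1; omega⟩

lemma apply_lastBelow_lt (hB : ∀ i, |ω i - i| ≤ B) (hdown : ∀ c, ∃ j, c < j ∧ ω j ≤ c)
    (v : ℤ) : ω (lastBelow ω v) < v := by
  obtain ⟨j, -, hj⟩ := hdown (v - 1)
  exact Int.csSup_mem ⟨j, show ω j < v by omega⟩ (bddAbove_setOf_apply_lt hB v)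

lemma le_lastBelow (hB : ∀ i, |ω i - i| ≤ B) {z v : ℤ} (hz : ω z < v) : z ≤ lastBelow ω v :=
  le_csSup (bddAbove_setOf_apply_lt hB v) hz

lemma le_apply_of_lastBelow_lt (hB : ∀ i, |ω i - i| ≤ B) {z v : ℤ} (hz : lastBelow ω v < z) :
    v ≤ ω z :=
  not_lt.mp fun h => (le_lastBelow hB h).not_gt hz

lemma lastBelow_add (hB : ∀ i, |ω i - i| ≤ B) (hper : ∀ i, ω (i + N) = ω i + N)
    (hdown : ∀ c, ∃ j, c < j ∧ ω j ≤ c) (v : ℤ) :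
    lastBelow ω (v + N) = lastBelow ω v + N := by
  have h1 := apply_lastBelow_lt hB hdown v
  have h2 := apply_lastBelow_lt hB hdown (v + N)
  have h3 := le_lastBelow hB (z := lastBelow ω v + N) (v := v + N) (by rw [hper]; omega)
  have h4 := le_lastBelow hB (z := lastBelow ω (v + N) - N) (v := v) (by
    have := hper (lastBelow ω (v + N) - N)
    rw [sub_add_cancel] at this
    omega)
  omega

end Records

section Orbit

lemma exists_iterate_eq_add_mul (σ : ℤ → ℤ) (hN : N ≠ 0) (x : ℤ) :
    ∃ a b : ℕ, a < b ∧ ∃ q : ℤ, σ^[b] x = σ^[a] x + q * N := by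
  obtain ⟨a, b, hab, heq⟩ := Set.Finite.exists_lt_map_eq_of_forall_mem
    (f := fun m : ℕ => σ^[m] x % N) (t := Set.Ico 0 (N.natAbs : ℤ))
    (fun m => ⟨Int.emod_nonneg _ hN, Int.emod_lt _ hN⟩) (Set.finite_Ico _ _)
  obtain ⟨q, hq⟩ := Int.ModEq.dvd heq
  exact ⟨a, b, hab, q, by rw [mul_comm]; omega⟩

lemma exists_orbit_of_iterate_eq_add {σ : ℤ → ℤ} {M : ℤ} (hσ : ∀ x, σ (x + M) = σ x + M)
    {T : ℕ} (hT : 0 < T) {β : ℤ} (hβ : σ^[T] β = β + M) :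
    ∃ x : ℤ → ℤ, ∀ k, x (k + 1) = σ (x k) := by
  have hT' : (0 : ℤ) < T := by exact_mod_cast hT
  refine ⟨fun k => σ^[(k % T).toNat] β + k / T * M, fun k => ?_⟩
  have := Int.emod_nonneg k hT'.ne'
  have := Int.emod_lt_of_pos k hT'
  have := Int.emod_add_mul_ediv k T
  dsimp only
  rw [apply_add_mul_of_apply_add hσ, ← Function.iterate_succ_apply' σ]
  rcases (show k % T + 1 < T ∨ k % T + 1 = T by omega) with hlt | heq
  · obtain ⟨hq, hr⟩ := (Int.ediv_emod_unique hT' (a := k + 1) (q := k / T)).mpr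
      ⟨by omega, by omega, hlt⟩
    rw [hq, hr, show (k % T + 1).toNat = (k % T).toNat + 1 by omega]
  · obtain ⟨hq, hr⟩ := (Int.ediv_emod_unique hT' (a := k + 1) (q := k / T + 1)).mpr
      ⟨by linarith, le_rfl, hT'⟩
    rw [hq, hr, show (k % T).toNat.succ = T by omega, hβ]
    simp only [Int.toNat_zero, Function.iterate_zero, id]
    ring

lemma exists_orbit_of_add {σ : ℤ → ℤ} (hN : N ≠ 0) (hσ : ∀ x, σ (x + N) = σ x + N) :
    ∃ x : ℤ → ℤ, ∀ k, x (k + 1) = σ (x k) := by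
  obtain ⟨a, b, hab, q, hq⟩ := exists_iterate_eq_add_mul σ hN 0
  refine exists_orbit_of_iterate_eq_add (apply_add_mul_of_apply_add hσ q)
    (Nat.sub_pos_of_lt hab) (β := σ^[a] 0) ?_
  rw [← Function.iterate_add_apply, Nat.sub_add_cancel hab.le, hq]

end Orbit

def interleave {α : Type*} (a b : ℤ → α) (i : ℤ) : α := if Even i then a (i / 2) else b (i / 2)

section Interleave

variable {α : Type*} {a b : ℤ → α}

@[simp]
lemma interleave_two_mul (k : ℤ) : interleave a b (2 * k) = a k := by
  simp [interleave]

@[simp]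
lemma interleave_two_mul_add_one (k : ℤ) : interleave a b (2 * k + 1) = b k := by
  rw [interleave, if_neg (by simp [parity_simps]), show (2 * k + 1) / 2 = k by omega]

lemma strictMono_interleave [Preorder α] (hab : ∀ k, a k < b k) (hba : ∀ k, b k < a (k + 1)) :
    StrictMono (interleave a b) := by
  refine strictMono_int_of_lt_succ fun i => ?_
  obtain ⟨k, rfl | rfl⟩ := Int.even_or_odd' i
  · simpa using hab k
  · simpa [show 2 * k + 1 + 1 = 2 * (k + 1) by ring] using hba k

end Interleave

lemma containsAffine_oscillO_of_interleaved (s p : ℤ → ℤ)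
    (hsp : ∀ k, s k < p k) (hps : ∀ k, p k < s (k + 1))
    (hlow : ∀ k, ω (s (k + 2)) < ω (p k)) (hhigh : ∀ k, ω (p k) < ω (s (k + 3))) :
    ContainsAffine ω oscillO := by
  refine ⟨interleave s p, interleave (fun k => ω (s (k + 1))) (fun k => ω (p (k - 1))),
    strictMono_interleave hsp hps, strictMono_interleave (fun k => ?_) (fun k => ?_), fun i => ?_⟩
  · simpa [show k - 1 + 2 = k + 1 by ring] using hlow (k - 1)
  · simpa [show k - 1 + 3 = k + 1 + 1 by ring] using hhigh (k - 1)
  · obtain ⟨k, rfl | rfl⟩ := Int.even_or_odd' i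
    · simp [oscillO_two_mul]
    · simp [oscillO_two_mul_add_one]

def IsRecordOrbit (ω s : ℤ → ℤ) : Prop :=
  ∀ k, s (k + 1) = lastBelow ω (prefixMax ω (s k - 1))

section RecordOrbit

variable {s : ℤ → ℤ} {B : ℤ}

lemma IsRecordOrbit.apply_lt (hs : IsRecordOrbit ω s) (hB : ∀ i, |ω i - i| ≤ B)
    (hdown : ∀ c, ∃ j, c < j ∧ ω j ≤ c) (k : ℤ) : ω (s (k + 1)) < prefixMax ω (s k - 1) :=
  hs k ▸ apply_lastBelow_lt hB hdown _

lemma IsRecordOrbit.le_apply (hs : IsRecordOrbit ω s) (hB : ∀ i, |ω i - i| ≤ B) {k z : ℤ}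
    (hz : s (k + 1) < z) : prefixMax ω (s k - 1) ≤ ω z :=
  le_apply_of_lastBelow_lt hB (hs k ▸ hz)

lemma IsRecordOrbit.strictMono (hs : IsRecordOrbit ω s) (hinj : Function.Injective ω)
    (hB : ∀ i, |ω i - i| ≤ B) (hup : ∀ c, ∃ i, i ≤ c ∧ c < ω i)
    (hdown : ∀ c, ∃ j, c < j ∧ ω j ≤ c) : StrictMono s := by
  refine strictMono_int_of_lt_succ fun k => ?_
  obtain ⟨j, hj, hjle⟩ := hdown (s k)
  obtain ⟨i, hi, hieq⟩ := exists_apply_eq_prefixMax hB (s k - 1)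
  have := lt_prefixMax hB hup (s k - 1)
  have hne : ω j ≠ ω i := fun h => by have := hinj h; omega
  have := le_lastBelow hB (v := prefixMax ω (s k - 1)) (z := j) (by omega)
  rw [hs k]
  omega

lemma IsRecordOrbit.containsAffine_oscillO (hs : IsRecordOrbit ω s)
    (hinj : Function.Injective ω) (hB : ∀ i, |ω i - i| ≤ B)
    (hup : ∀ c, ∃ i, i ≤ c ∧ c < ω i) (hdown : ∀ c, ∃ j, c < j ∧ ω j ≤ c) :
    ContainsAffine ω oscillO := by
  have hmono := hs.strictMono hinj hB hup hdown
  choose p hp hpeq using fun k => exists_apply_eq_prefixMax hB (s (k + 1) - 1)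
  have hlow : ∀ k, ω (s (k + 2)) < ω (p k) := fun k => by
    rw [hpeq, show k + 2 = k + 1 + 1 by ring]
    exact hs.apply_lt hB hdown (k + 1)
  refine containsAffine_oscillO_of_interleaved s p (fun k => ?_) (fun k => by linarith [hp k])
    hlow (fun k => ?_)
  · -- `p k` cannot come before `s k`: everything up to `s k` lies below `ω (s (k + 2))`
    by_contra! hle
    have := hlow k
    rcases hle.lt_or_eq with hlt | heq
    · have := hs.le_apply hB (k := k) (z := s (k + 2)) (hmono (by omega))
      have := apply_le_prefixMax hB (show p k ≤ s k - 1 by omega)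
      omega
    · have h1 := hs.apply_lt hB hdown (k - 1)
      have := hs.le_apply hB (k := k - 1) (z := s (k + 2)) (hmono (by omega))
      rw [sub_add_cancel, ← heq] at h1
      omega
  · have := hs.le_apply hB (k := k + 1) (z := s (k + 3)) (hmono (by omega))
    have hne : ω (p k) ≠ ω (s (k + 3)) := fun h => by
      have := hinj h; have := hp k; have := hmono (show k + 1 < k + 3 by omega); omega
    rw [hpeq] at hne ⊢
    omega

end RecordOrbit

lemma containsAffine_oscillO_of_crossings (hN : N ≠ 0) (hinj : Function.Injective ω)
    (hper : ∀ i, ω (i + N) = ω i + N) {B : ℤ} (hB : ∀ i, |ω i - i| ≤ B)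
    (hup : ∀ c, ∃ i, i ≤ c ∧ c < ω i) (hdown : ∀ c, ∃ j, c < j ∧ ω j ≤ c) :
    ContainsAffine ω oscillO := by
  obtain ⟨s, hs⟩ := exists_orbit_of_add (σ := fun x => lastBelow ω (prefixMax ω (x - 1))) hN
    fun x => by
      rw [show x + N - 1 = x - 1 + N by ring, prefixMax_add hB hper, lastBelow_add hB hper hdown]
  exact IsRecordOrbit.containsAffine_oscillO hs hinj hB hup hdown

end AffinePermutation

open AffinePermutation

/-- an affine permutation is decomposable iff it avoids the infinite
increasing oscillation `𝒪`. -/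
theorem stmt8 (n : ℕ) (hn : 1 ≤ n) (ω : ℤ → ℤ) (hω : IsAffinePerm n ω) :
    IsDecomposableAffine ω ↔ ¬ ContainsAffine ω oscillO := by
  obtain ⟨hbij, hper, hsum⟩ := hω
  have hn' : (0 : ℤ) < n := by exact_mod_cast hn
  refine ⟨fun hdec => ?_, fun hav => by_contra fun hdec => hav ?_⟩
  · obtain ⟨c, hc⟩ := hdec.exists_isCut
    exact not_containsAffine_oscillO_of_isCut hc
  · have hbal : ∑ i ∈ Ioc 0 (n : ℤ), (ω i - i) = 0 := by
      rw [sum_sub_distrib, ← Icc_add_one_left_eq_Ioc, zero_add, hsum, sub_self]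
    obtain ⟨B, hB⟩ := exists_abs_sub_le hn' hper
    have hcross c := exists_crossings_of_not_isCut hn' hbij.injective hper hbal hB
      fun hc => hdec (isDecomposableAffine_of_isCut hn hbij.injective hper (c := c) hc)
    exact containsAffine_oscillO_of_crossings hn'.ne' hbij.injective hper hB
      (fun c => (hcross c).1) (fun c => (hcross c).2)
end
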